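/- arXiv:2207.12523 — 4 statements merged into one kernel-verified Lean document; each statement's English description precedes it below -/
import Mathlib

section
/- A finite irreflexive oriented graph G has a proper oriented 3-colouring if and only if there is no oriented cycle C of net-length not divisible by 3 such that the disjoint union P_4 ∪ C has a homomorphism to G. -/
/-- A homomorphism of directed graphs (given as binary relations). -/
def IsHom {A : Type} {B : Type} (R : A → A → Prop) (S : B → B → Prop) (f : A → B) : Prop :=
  ∀ x y, R x y → S (f x) (f y)

/-- ios-injectivity: injective on in-neighbourhoods and on out-neighbourhoods separately. -/
def IosInj {A : Type} {B : Type} (R : A → A → Prop) (f : A → B) : Prop :=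
  ∀ x : A, Set.InjOn f {y | R y x} ∧ Set.InjOn f {y | R x y}

/-- iot-injectivity: injective on the union of in- and out-neighbourhoods. -/
def IotInj {A : Type} {B : Type} (R : A → A → Prop) (f : A → B) : Prop :=
  ∀ x : A, Set.InjOn f ({y | R y x} ∪ {y | R x y})

/-- An oriented graph: between two distinct vertices at most one arc. -/
def IsOriented {A : Type} (R : A → A → Prop) : Prop :=
  ∀ x y, x ≠ y → ¬(R x y ∧ R y x)

/-- Irreflexive (no loops). -/
def NoLoops {A : Type} (R : A → A → Prop) : Prop := ∀ x, ¬ R x x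

/-- `R` is (isomorphic to) a subgraph of `S`: an injective arc-preserving map. -/
def Subg {A : Type} {B : Type} (R : A → A → Prop) (S : B → B → Prop) : Prop :=
  ∃ g : A → B, Function.Injective g ∧ IsHom R S g

/-- There exists an ios-injective homomorphism of `R` to `S`. -/
def IosHomEx {A : Type} {B : Type} (R : A → A → Prop) (S : B → B → Prop) : Prop :=
  ∃ g : A → B, IsHom R S g ∧ IosInj R g

/-- There exists an iot-injective homomorphism of `R` to `S`. -/
def IotHomEx {A : Type} {B : Type} (R : A → A → Prop) (S : B → B → Prop) : Prop :=
  ∃ g : A → B, IsHom R S g ∧ IotInj R g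

/-- Converse (all arcs reversed). -/
def convRel {A : Type} (R : A → A → Prop) : A → A → Prop := fun x y => R y x

/-- Transitive tournament `T_n`. -/
def TTrel (n : ℕ) : Fin n → Fin n → Prop := fun i j => i < j

/-- Reflexive transitive tournament `T_2^r`. -/
def T2r : Fin 2 → Fin 2 → Prop := fun i j => i ≤ j

/-- Reflexive one-vertex tournament `T_1^r`. -/
def T1r : PUnit → PUnit → Prop := fun _ _ => True

/-- Directed path `P_N` on `N` vertices. -/
def DPathRel (N : ℕ) : Fin N → Fin N → Prop := fun x y => (y : ℕ) = (x : ℕ) + 1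

/-- Directed cycle `C_m` on `m` vertices. -/
def DCycRel (m : ℕ) : Fin m → Fin m → Prop := fun x y => (y : ℕ) = ((x : ℕ) + 1) % m

/-- Oriented path on `n+1` vertices: edge `t` (between `v_t` and `v_{t+1}`) is
oriented forwards iff `σ t = true`. -/
def OPathRel (n : ℕ) (σ : ℕ → Bool) : Fin (n + 1) → Fin (n + 1) → Prop :=
  fun x y => ∃ t : ℕ, t < n ∧
    ((σ t = true ∧ (x : ℕ) = t ∧ (y : ℕ) = t + 1) ∨
     (σ t = false ∧ (x : ℕ) = t + 1 ∧ (y : ℕ) = t))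

/-- Oriented cycle on `m` vertices: edge `t` (between `v_t` and `v_{t+1 mod m}`) is
oriented forwards iff `σ t = true`. -/
def OCycRel (m : ℕ) (σ : ℕ → Bool) : Fin m → Fin m → Prop :=
  fun x y => ∃ t : ℕ, t < m ∧
    ((σ t = true ∧ (x : ℕ) = t ∧ (y : ℕ) = (t + 1) % m) ∨
     (σ t = false ∧ (x : ℕ) = (t + 1) % m ∧ (y : ℕ) = t))

/-- The hat `H_3`: arcs `v_0 → v_1` and `v_2 → v_1`. -/
def H3rel : Fin 3 → Fin 3 → Prop := fun i j => (i = 0 ∧ j = 1) ∨ (i = 2 ∧ j = 1)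

/-- `H_4`: arcs `h_0 → h_3`, `h_1 → h_3`, `h_2 → h_3`. -/
def H4rel : Fin 4 → Fin 4 → Prop := fun i j => (i = 0 ∨ i = 1 ∨ i = 2) ∧ j = 3

/-- `A_4`: arcs `h_0 → h_2`, `h_1 → h_2`, `h_2 → h_3`. -/
def A4rel : Fin 4 → Fin 4 → Prop := fun i j => ((i = 0 ∨ i = 1) ∧ j = 2) ∨ (i = 2 ∧ j = 3)

/-- `H_5`: two directed paths of length two with a common initial vertex `0`:
arcs `0→1`, `1→2`, `0→3`, `3→4`. -/
def H5rel : Fin 5 → Fin 5 → Prop :=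
  fun i j => (i = 0 ∧ j = 1) ∨ (i = 1 ∧ j = 2) ∨ (i = 0 ∧ j = 3) ∨ (i = 3 ∧ j = 4)

/-- `B_2`: arcs `a→b`, `c→b`, `c→d`, `e→d` (vertices `a,b,c,d,e = 0,1,2,3,4`). -/
def B2rel : Fin 5 → Fin 5 → Prop :=
  fun i j => (i = 0 ∧ j = 1) ∨ (i = 2 ∧ j = 1) ∨ (i = 2 ∧ j = 3) ∨ (i = 4 ∧ j = 3)

/-- `X_2`: orientation of `K_{1,4}` with centre `0` of in-degree 2 and out-degree 2:
arcs `1→0`, `2→0`, `0→3`, `0→4`. -/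
def X2rel : Fin 5 → Fin 5 → Prop :=
  fun i j => ((i = 1 ∨ i = 2) ∧ j = 0) ∨ (i = 0 ∧ (j = 3 ∨ j = 4))

/-- An orientation of the star `K_{1,3}`: centre `none`, leaves `some i`;
edge `i` points away from the centre iff `ε i = true`. -/
def starRel (ε : Fin 3 → Bool) : Option (Fin 3) → Option (Fin 3) → Prop :=
  fun u v => ∃ i : Fin 3,
    (ε i = true ∧ u = none ∧ v = some i) ∨ (ε i = false ∧ u = some i ∧ v = none)

/-- An oriented `k`-colouring: for arcs `xy` and `vw`, `f x = f w → f y ≠ f v`. -/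
def OrCol {A : Type} (R : A → A → Prop) {k : ℕ} (f : A → Fin k) : Prop :=
  ∀ x y v w, R x y → R v w → f x = f w → f y ≠ f v

/-- Proper: distinct adjacent vertices get different colours. -/
def ProperCol {A : Type} {B : Type} (R : A → A → Prop) (f : A → B) : Prop :=
  ∀ x y, R x y → x ≠ y → f x ≠ f y

/-- Disjoint union of two directed graphs. -/
def sumRel {A B : Type} (R : A → A → Prop) (S : B → B → Prop) : A ⊕ B → A ⊕ B → Prop
  | Sum.inl a, Sum.inl a' => R a a'
  | Sum.inr b, Sum.inr b' => S b b'
  | _, _ => False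

/-- Net-length of the oriented cycle on `m` vertices with orientation `σ`:
number of forwards arcs minus number of backwards arcs. -/
def netLen (m : ℕ) (σ : ℕ → Bool) : ℤ :=
  (((Finset.range m).filter fun t => σ t = true).card : ℤ) -
    (((Finset.range m).filter fun t => σ t = false).card : ℤ)

/-- Undirected connectivity relation of a directed graph. -/
def UConn {V : Type} (E : V → V → Prop) : V → V → Prop :=
  Relation.ReflTransGen (fun a b => E a b ∨ E b a)

/-- The relation induced on the connected component of `x`. -/
def componentRel {V : Type} (E : V → V → Prop) (x : V) :
    {y : V // UConn E x y} → {y : V // UConn E x y} → Prop :=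
  fun a b => E a.val b.val

/-- Isomorphism of directed graphs. -/
def IsoRel {A B : Type} (R : A → A → Prop) (S : B → B → Prop) : Prop :=
  ∃ e : A ≃ B, ∀ a a', R a a' ↔ S (e a) (e a')

/-- An alternating matching in the oriented path on `n+1` vertices (edges `0,…,n-1`,
orientations `σ`): `μ t` means edge `t` is in the matching.  It is a matching,
saturates every internal (degree-two) vertex, and consecutive matching edges have
opposite orientations. -/
def PathAltMatching (n : ℕ) (σ : ℕ → Bool) (μ : ℕ → Prop) : Prop :=
  (∀ t, μ t → t < n) ∧
  (∀ t, ¬(μ t ∧ μ (t + 1))) ∧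
  (∀ v, 1 ≤ v → v + 1 ≤ n → (μ (v - 1) ∨ μ v)) ∧
  (∀ t t', μ t → μ t' → t < t' → (∀ s, t < s → s < t' → ¬ μ s) → σ t ≠ σ t')

/-- An alternating matching in the oriented cycle on `m` vertices (edges mod `m`):
a matching saturating every vertex whose successive edges (cyclically) have
opposite orientations. -/
def CycAltMatching (m : ℕ) (σ : ℕ → Bool) (μ : ℕ → Prop) : Prop :=
  (∀ t, μ t → t < m) ∧
  (∀ t, t < m → ¬(μ t ∧ μ ((t + 1) % m))) ∧
  (∀ v, v < m → (μ v ∨ μ ((v + m - 1) % m))) ∧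
  (∀ t d, t < m → 0 < d → d < m → μ t → μ ((t + d) % m) →
    (∀ s, 0 < s → s < d → ¬ μ ((t + s) % m)) → σ t ≠ σ ((t + d) % m))
def wt3 (σ : ℕ → Bool) (n : ℕ) : ZMod 3 := ∑ t ∈ Finset.range n, (if σ t then 1 else -1)

lemma wt3_succ (σ : ℕ → Bool) (n : ℕ) :
    wt3 σ (n + 1) = wt3 σ n + (if σ n then 1 else -1) := Finset.sum_range_succ _ _

lemma netLen_eq (m : ℕ) (σ : ℕ → Bool) :
    netLen m σ = ∑ t ∈ Finset.range m, (if σ t then (1:ℤ) else -1) := by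
  induction m with
  | zero => simp [netLen]
  | succ n ih =>
    rw [Finset.sum_range_succ, ← ih]
    unfold netLen
    rw [Finset.range_add_one, Finset.filter_insert, Finset.filter_insert]
    by_cases h : σ n = true
    · rw [if_pos h, if_neg (by simp [h]),
        Finset.card_insert_of_notMem (by simp)]
      push_cast
      simp [h]
      ring
    · rw [if_neg h, if_pos (by simp [h]),
        Finset.card_insert_of_notMem (by simp)]
      push_cast
      simp [h]
      ring

lemma castNet (m : ℕ) (σ : ℕ → Bool) : ((netLen m σ : ℤ) : ZMod 3) = wt3 σ m := by
  rw [netLen_eq]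
  push_cast [wt3]
  refine Finset.sum_congr rfl fun t _ => ?_
  split <;> simp

lemma sum_range_add' {M : Type*} [AddCommMonoid M] (f : ℕ → M) (m n : ℕ) :
    ∑ i ∈ Finset.range (m + n), f i =
      (∑ i ∈ Finset.range m, f i) + ∑ i ∈ Finset.range n, f (m + i) := by
  induction n with
  | zero => simp
  | succ n ih => rw [Nat.add_succ, Finset.sum_range_succ, ih, Finset.sum_range_succ, add_assoc]

inductive Reach3 {V : Type} (E : V → V → Prop) (a : V) : V → ZMod 3 → Prop
  | refl : Reach3 E a a 0
  | fwd {u v : V} {k : ZMod 3} : Reach3 E a u k → E u v → Reach3 E a v (k + 1)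
  | bwd {u v : V} {k : ZMod 3} : Reach3 E a u k → E v u → Reach3 E a v (k - 1)

lemma reach3_trans {V : Type} {E : V → V → Prop} {a b c : V} {k k' : ZMod 3}
    (h1 : Reach3 E a b k) (h2 : Reach3 E b c k') : Reach3 E a c (k + k') := by
  induction h2 with
  | refl => simpa using h1
  | fwd h hE ih => have := ih.fwd hE; rwa [add_assoc] at this
  | bwd h hE ih => have := ih.bwd hE; rwa [add_sub_assoc] at this

lemma reach3_symm {V : Type} {E : V → V → Prop} {a b : V} {k : ZMod 3}
    (h : Reach3 E a b k) : Reach3 E b a (-k) := by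
  induction h with
  | refl => simpa using Reach3.refl
  | @fwd u v k h hE ih =>
    have h1 : Reach3 E v u (0 - 1) := Reach3.bwd Reach3.refl hE
    have := reach3_trans h1 ih
    have he : (0 - 1) + -k = -(k + 1) := by ring
    rwa [he] at this
  | @bwd u v k h hE ih =>
    have h1 : Reach3 E v u (0 + 1) := Reach3.fwd Reach3.refl hE
    have := reach3_trans h1 ih
    have he : (0 + 1) + -k = -(k - 1) := by ring
    rwa [he] at this

lemma reach3_to_walk {V : Type} {E : V → V → Prop} {a v : V} {k : ZMod 3}
    (h : Reach3 E a v k) :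
    ∃ (n : ℕ) (σ : ℕ → Bool) (w : ℕ → V),
      (∀ t, t < n → ((σ t = true ∧ E (w t) (w (t+1))) ∨ (σ t = false ∧ E (w (t+1)) (w t)))) ∧
      w 0 = a ∧ w n = v ∧ wt3 σ n = k := by
  induction h with
  | refl => exact ⟨0, fun _ => true, fun _ => a, fun t ht => absurd ht (by omega), rfl, rfl,
      by simp [wt3]⟩
  | @fwd u v' k h hE ih =>
    obtain ⟨n, σ, w, hw, h0, hn, hwt⟩ := ih
    refine ⟨n + 1, fun t => if t < n then σ t else true,
      fun t => if t ≤ n then w t else v', ?_, ?_, ?_, ?_⟩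
    · intro t ht
      rcases Nat.lt_or_ge t n with h' | h'
      · rcases hw t h' with ⟨hs, hEE⟩ | ⟨hs, hEE⟩
        · exact Or.inl ⟨by simp [h', hs], by
            simpa [Nat.le_of_lt h', Nat.succ_le_of_lt h'] using hEE⟩
        · exact Or.inr ⟨by simp [h', hs], by
            simpa [Nat.le_of_lt h', Nat.succ_le_of_lt h'] using hEE⟩
      · have ht' : t = n := by omega
        subst ht'
        refine Or.inl ⟨by simp, ?_⟩
        simpa [hn] using hE
    · simpa using h0
    · simp
    · rw [wt3_succ]
      have : wt3 (fun t => if t < n then σ t else true) n = wt3 σ n := by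
        unfold wt3
        exact Finset.sum_congr rfl fun t ht => by
          simp [Finset.mem_range.mp ht]
      rw [this, hwt]
      simp
  | @bwd u v' k h hE ih =>
    obtain ⟨n, σ, w, hw, h0, hn, hwt⟩ := ih
    refine ⟨n + 1, fun t => if t < n then σ t else false,
      fun t => if t ≤ n then w t else v', ?_, ?_, ?_, ?_⟩
    · intro t ht
      rcases Nat.lt_or_ge t n with h' | h'
      · rcases hw t h' with ⟨hs, hEE⟩ | ⟨hs, hEE⟩
        · exact Or.inl ⟨by simp [h', hs], by
            simpa [Nat.le_of_lt h', Nat.succ_le_of_lt h'] using hEE⟩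
        · exact Or.inr ⟨by simp [h', hs], by
            simpa [Nat.le_of_lt h', Nat.succ_le_of_lt h'] using hEE⟩
      · have ht' : t = n := by omega
        subst ht'
        refine Or.inr ⟨by simp, ?_⟩
        simpa [hn] using hE
    · simpa using h0
    · simp
    · rw [wt3_succ]
      have : wt3 (fun t => if t < n then σ t else false) n = wt3 σ n := by
        unfold wt3
        exact Finset.sum_congr rfl fun t ht => by
          simp [Finset.mem_range.mp ht]
      rw [this, hwt]
      simp [sub_eq_add_neg]

lemma reach3_unique {V : Type} {E : V → V → Prop} (hirr : NoLoops E)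
    (hns : ¬ ∃ (m : ℕ) (σ : ℕ → Bool), 3 ≤ m ∧ ¬ ((3 : ℤ) ∣ netLen m σ) ∧
        ∃ g : (Fin 4 ⊕ Fin m) → V, IsHom (sumRel (DPathRel 4) (OCycRel m σ)) E g)
    (hP : ∃ a b c d : V, E a b ∧ E b c ∧ E c d)
    {a v : V} {k k' : ZMod 3} (h1 : Reach3 E a v k) (h2 : Reach3 E a v k') : k = k' := by
  by_contra hne
  have hδ : k + -k' ≠ 0 := fun h => hne (by linear_combination h)
  have hcl : Reach3 E a a (k + -k') := reach3_trans h1 (reach3_symm h2)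
  obtain ⟨n, σ, w, hw, h0, hn, hwt⟩ := reach3_to_walk hcl
  have hδ' : wt3 σ n ≠ 0 := by rw [hwt]; exact hδ
  have hn0 : n ≠ 0 := by rintro rfl; exact hδ' (by simp [wt3])
  have hn1 : n ≠ 1 := by
    rintro rfl
    have hE : E a a := by
      rcases hw 0 (by omega) with ⟨_, hE⟩ | ⟨_, hE⟩
      · rwa [h0, hn] at hE
      · rwa [h0, hn] at hE
    exact hirr a hE
  have hn2 : 2 ≤ n := by omega
  have hnpos : 0 < n := by omega
  -- closure
  have hclose : ∀ s, s < n → w ((s + 1) % n) = w (s + 1) := by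
    intro s hs
    rcases Nat.lt_or_ge (s + 1) n with h' | h'
    · rw [Nat.mod_eq_of_lt h']
    · have : s + 1 = n := by omega
      rw [this, Nat.mod_self, h0, hn]
  obtain ⟨pa, pb, pc, pd, hab, hbc, hcd⟩ := hP
  apply hns
  refine ⟨2 * n, fun t => σ (t % n), by omega, ?_, ?_⟩
  · -- net length not divisible by 3
    intro hdvd
    have hc0 : ((netLen (2 * n) (fun t => σ (t % n)) : ℤ) : ZMod 3) = 0 := by
      have := (ZMod.intCast_zmod_eq_zero_iff_dvd (netLen (2 * n) (fun t => σ (t % n))) 3).mpr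
        (by exact_mod_cast hdvd)
      exact this
    rw [castNet] at hc0
    have hdouble : wt3 (fun t => σ (t % n)) (2 * n) = wt3 σ n + wt3 σ n := by
      unfold wt3
      rw [two_mul, sum_range_add']
      congr 1
      · exact Finset.sum_congr rfl fun t ht => by
          simp only [Nat.mod_eq_of_lt (Finset.mem_range.mp ht)]
      · exact Finset.sum_congr rfl fun t ht => by
          simp only [Nat.add_mod_left, Nat.mod_eq_of_lt (Finset.mem_range.mp ht)]
    rw [hdouble] at hc0
    exact (by decide : ∀ z : ZMod 3, z ≠ 0 → z + z ≠ 0) _ hδ' hc0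
  · -- the homomorphism
    refine ⟨Sum.elim
      (fun i : Fin 4 => if (i : ℕ) = 0 then pa else if (i : ℕ) = 1 then pb
        else if (i : ℕ) = 2 then pc else pd)
      (fun j : Fin (2 * n) => w ((j : ℕ) % n)), ?_⟩
    rintro (i | i) (j | j) hij
    · -- path part
      have hj : (j : ℕ) = (i : ℕ) + 1 := hij
      have hj4 := j.isLt
      have hi : (i : ℕ) = 0 ∨ (i : ℕ) = 1 ∨ (i : ℕ) = 2 := by omega
      rcases hi with hi | hi | hi <;>
        · rw [hi] at hj
          simp only [Sum.elim_inl, hi, hj]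
          norm_num
          first | exact hab | exact hbc | exact hcd
    · exact absurd hij (by simp [sumRel])
    · exact absurd hij (by simp [sumRel])
    · -- cycle part
      obtain ⟨t, ht, hcase⟩ := hij
      have hdvd2 : n ∣ 2 * n := dvd_mul_left n 2
      have hsn : t % n < n := Nat.mod_lt _ hnpos
      have hmodeq : (t % n + 1) % n = (t + 1) % n := by
        have : t % n + 1 ≡ t + 1 [MOD n] := Nat.ModEq.add_right 1 (Nat.mod_modEq t n)
        exact this
      rcases hcase with ⟨hσ, hx, hy⟩ | ⟨hσ, hx, hy⟩
      · have hσ' : σ (t % n) = true := hσ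
        have hE : E (w (t % n)) (w (t % n + 1)) := by
          rcases hw (t % n) hsn with ⟨_, hE⟩ | ⟨hs, _⟩
          · exact hE
          · exact absurd hσ' (by simp [hs])
        simp only [Sum.elim_inr, hx, hy]
        rw [Nat.mod_mod_of_dvd _ hdvd2, ← hmodeq, hclose _ hsn]
        exact hE
      · have hσ' : σ (t % n) = false := hσ
        have hE : E (w (t % n + 1)) (w (t % n)) := by
          rcases hw (t % n) hsn with ⟨hs, _⟩ | ⟨_, hE⟩
          · exact absurd hσ' (by simp [hs])
          · exact hE
        simp only [Sum.elim_inr, hx, hy]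
        rw [Nat.mod_mod_of_dvd _ hdvd2, ← hmodeq, hclose _ hsn]
        exact hE

/-- A finite irreflexive oriented graph `G` has a proper oriented
3-colouring iff there is no oriented cycle `C` of net-length not divisible by 3 such
that `P_4 ∪ C` has a homomorphism to `G`. -/
theorem stmt1 {V : Type} [Fintype V] (E : V → V → Prop)
    (hor : IsOriented E) (hirr : NoLoops E) :
    (∃ f : V → Fin 3, OrCol E f ∧ ProperCol E f) ↔
      ¬ ∃ (m : ℕ) (σ : ℕ → Bool), 3 ≤ m ∧ ¬ ((3 : ℤ) ∣ netLen m σ) ∧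
        ∃ g : (Fin 4 ⊕ Fin m) → V, IsHom (sumRel (DPathRel 4) (OCycRel m σ)) E g := by
  constructor
  · rintro ⟨f, hf, -⟩ ⟨m, σ, hm3, hnd, g, hg⟩
    have hm : 0 < m := by omega
    set H : Fin 3 → Fin 3 → Prop := fun p q => ∃ u v, E u v ∧ f u = p ∧ f v = q with hH
    have hirrH : ∀ p, ¬ H p p := by
      rintro p ⟨u, v2, huv, e1, e2⟩
      exact hf u v2 u v2 huv huv (e1.trans e2.symm) (e2.trans e1.symm)
    have hasymH : ∀ p q, H p q → H q p → False := by
      rintro p q ⟨u, v2, huv, e1, e2⟩ ⟨s, t, hst, e3, e4⟩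
      exact hf u v2 s t huv hst (e1.trans e4.symm) (e2.trans e3.symm)
    have harc : ∀ (i j : Fin 4), DPathRel 4 i j →
        H (f (g (Sum.inl i))) (f (g (Sum.inl j))) :=
      fun i j hij => ⟨_, _, hg (Sum.inl i) (Sum.inl j) hij, rfl, rfl⟩
    set a := f (g (Sum.inl 0)) with ha
    set b := f (g (Sum.inl 1)) with hb
    set c := f (g (Sum.inl 2)) with hc
    set d := f (g (Sum.inl 3)) with hd
    have HAB : H a b := harc 0 1 (show ((1:Fin 4):ℕ) = ((0:Fin 4):ℕ) + 1 by decide)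
    have HBC : H b c := harc 1 2 (show ((2:Fin 4):ℕ) = ((1:Fin 4):ℕ) + 1 by decide)
    have HCD : H c d := harc 2 3 (show ((3:Fin 4):ℕ) = ((2:Fin 4):ℕ) + 1 by decide)
    have hab : a ≠ b := fun h => hirrH b (h ▸ HAB)
    have hbc : b ≠ c := fun h => hirrH c (h ▸ HBC)
    have hac : a ≠ c := fun h => hasymH a b HAB (by rw [← h] at HBC; exact HBC)
    have hbd : b ≠ d := fun h => hasymH b c HBC (by rw [← h] at HCD; exact HCD)
    have hcd : c ≠ d := fun h => hirrH d (h ▸ HCD)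
    have hda : d = a := by
      have v1 := a.isLt; have v2 := b.isLt; have v3 := c.isLt; have v4 := d.isLt
      have n1 : a.val ≠ b.val := fun h => hab (Fin.ext h)
      have n2 : b.val ≠ c.val := fun h => hbc (Fin.ext h)
      have n3 : a.val ≠ c.val := fun h => hac (Fin.ext h)
      have n4 : b.val ≠ d.val := fun h => hbd (Fin.ext h)
      have n5 : c.val ≠ d.val := fun h => hcd (Fin.ext h)
      exact Fin.ext (by omega)
    rw [hda] at HCD
    have hcases : ∀ x : Fin 3, x = a ∨ x = b ∨ x = c := by
      intro x
      by_contra hx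
      push_neg at hx
      obtain ⟨e1, e2, e3⟩ := hx
      have v0 := x.isLt; have v1 := a.isLt; have v2 := b.isLt; have v3 := c.isLt
      have n1 : a.val ≠ b.val := fun h => hab (Fin.ext h)
      have n2 : b.val ≠ c.val := fun h => hbc (Fin.ext h)
      have n3 : a.val ≠ c.val := fun h => hac (Fin.ext h)
      have m1 : x.val ≠ a.val := fun h => e1 (Fin.ext h)
      have m2 : x.val ≠ b.val := fun h => e2 (Fin.ext h)
      have m3 : x.val ≠ c.val := fun h => e3 (Fin.ext h)
      omega
    set ρ : Fin 3 → ZMod 3 := fun p => if p = a then 0 else if p = b then 1 else 2 with hρ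
    have hρa : ρ a = 0 := by simp [hρ]
    have hρb : ρ b = 1 := by simp [hρ, Ne.symm hab]
    have hρc : ρ c = 2 := by simp [hρ, Ne.symm hac, Ne.symm hbc]
    have hstep : ∀ p q, H p q → ρ q = ρ p + 1 := by
      intro p q hpq
      rcases hcases p with rfl | rfl | rfl <;> rcases hcases q with rfl | rfl | rfl
      · exact absurd hpq (hirrH _)
      · rw [hρb, hρa]; decide
      · exact absurd (hasymH _ _ hpq HCD) id
      · exact absurd (hasymH _ _ HAB hpq) id
      · exact absurd hpq (hirrH _)
      · rw [hρc, hρb]; decide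
      · rw [hρa, hρc]; decide
      · exact absurd (hasymH _ _ HBC hpq) id
      · exact absurd hpq (hirrH _)
    have key : ∀ t, t ≤ m →
        ρ (f (g (Sum.inr ⟨t % m, Nat.mod_lt t hm⟩))) =
          ρ (f (g (Sum.inr ⟨0 % m, Nat.mod_lt 0 hm⟩))) + wt3 σ t := by
      intro t
      induction t with
      | zero => intro _; simp [wt3]
      | succ t ih =>
        intro ht
        have htm : t < m := by omega
        have ih' := ih (Nat.le_of_lt htm)
        have hmt : t % m = t := Nat.mod_eq_of_lt htm
        rcases Bool.eq_false_or_eq_true (σ t) with hσ | hσ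
        · have harc2 : OCycRel m σ (⟨t % m, Nat.mod_lt t hm⟩ : Fin m)
              ⟨(t + 1) % m, Nat.mod_lt (t + 1) hm⟩ := ⟨t, htm, Or.inl ⟨hσ, hmt, rfl⟩⟩
          have hs := hstep _ _ ⟨_, _, hg (Sum.inr _) (Sum.inr _) harc2, rfl, rfl⟩
          rw [ih'] at hs
          rw [wt3_succ, hσ]
          simp only [if_true]
          linear_combination hs
        · -- backward arc: from vertex (t+1)%m to vertex t
          have harc2 : OCycRel m σ (⟨(t + 1) % m, Nat.mod_lt (t + 1) hm⟩ : Fin m)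
              ⟨t % m, Nat.mod_lt t hm⟩ := ⟨t, htm, Or.inr ⟨hσ, rfl, hmt⟩⟩
          have hs := hstep _ _ ⟨_, _, hg (Sum.inr _) (Sum.inr _) harc2, rfl, rfl⟩
          rw [ih'] at hs
          rw [wt3_succ, hσ]
          simp only [Bool.false_eq_true, if_false]
          linear_combination -hs
    have hfin := key m le_rfl
    have hfe : (⟨m % m, Nat.mod_lt m hm⟩ : Fin m) = ⟨0 % m, Nat.mod_lt 0 hm⟩ :=
      Fin.ext (by simp)
    rw [hfe] at hfin
    have hw0 : wt3 σ m = 0 := by linear_combination - hfin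
    apply hnd
    have := (ZMod.intCast_zmod_eq_zero_iff_dvd (netLen m σ) 3).mp (by rw [castNet]; exact hw0)
    exact_mod_cast this
  · intro hns
    classical
    by_cases hP : ∃ a b c d : V, E a b ∧ E b c ∧ E c d
    · -- the C_3 potential colouring
      letI s : Setoid V := ⟨fun u v => ∃ k, Reach3 E u v k,
        ⟨fun _ => ⟨0, Reach3.refl⟩,
         fun ⟨k, h⟩ => ⟨-k, reach3_symm h⟩,
         fun ⟨k, h⟩ ⟨k', h'⟩ => ⟨k + k', reach3_trans h h'⟩⟩⟩
      let rep : V → V := fun v => (Quotient.mk s v).out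
      have hrep : ∀ v, ∃ k, Reach3 E (rep v) v k := fun v =>
        Quotient.exact (Quotient.out_eq (Quotient.mk s v))
      have hrepE : ∀ u v, E u v → rep u = rep v := by
        intro u v h
        have : Quotient.mk s u = Quotient.mk s v :=
          Quotient.sound ⟨0 + 1, Reach3.fwd Reach3.refl h⟩
        simp only [rep, this]
      let pot : V → ZMod 3 := fun v => (hrep v).choose
      have hpot : ∀ v, Reach3 E (rep v) v (pot v) := fun v => (hrep v).choose_spec
      have hpotE : ∀ u v, E u v → pot v = pot u + 1 := by
        intro u v h
        have h1 : Reach3 E (rep u) v (pot u + 1) := (hpot u).fwd h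
        rw [hrepE u v h] at h1
        exact reach3_unique hirr hns hP (hpot v) h1
      let z2f : ZMod 3 → Fin 3 := fun z => z
      have hz2f : Function.Injective z2f := fun x y h => h
      refine ⟨fun v => z2f (pot v), ?_, ?_⟩
      · intro x y v w hxy hvw hxw hyv
        have e1 : pot y = pot x + 1 := hpotE _ _ hxy
        have e2 : pot w = pot v + 1 := hpotE _ _ hvw
        have e3 : pot x = pot w := hz2f hxw
        have e4 : pot y = pot v := hz2f hyv
        have hcontr : (2 : ZMod 3) = 0 := by linear_combination e4 - e1 - e2 - e3
        exact absurd hcontr (by decide)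
      · intro x y hxy _ hfeq
        have e1 : pot y = pot x + 1 := hpotE _ _ hxy
        have e4 : pot x = pot y := hz2f hfeq
        have hcontr : (1 : ZMod 3) = 0 := by linear_combination - e1 - e4
        exact absurd hcontr (by decide)
    · -- level colouring into TT_3
      have hA : ¬ ∃ a b c d : V, E a b ∧ E b c ∧ E c d := hP
      let q : V → Fin 3 := fun v =>
        if (∃ u w, E u w ∧ E w v) then 2 else if (∃ u, E u v) then 1 else 0
      have hlt0 : ∀ x y, E x y →
          ((if (∃ u w, E u w ∧ E w x) then (2 : Fin 3) else if (∃ u, E u x) then 1 else 0) : Fin 3).val <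
          ((if (∃ u w, E u w ∧ E w y) then (2 : Fin 3) else if (∃ u, E u y) then 1 else 0) : Fin 3).val := by
        intro x y hxy
        by_cases h2 : ∃ u w, E u w ∧ E w x
        · obtain ⟨u, w, h1', h2'⟩ := h2
          exact absurd ⟨u, w, x, y, h1', h2', hxy⟩ hA
        · rw [if_neg h2]
          by_cases h1 : ∃ u, E u x
          · obtain ⟨u, hu⟩ := h1
            rw [if_pos ⟨u, hu⟩, if_pos ⟨u, x, hu, hxy⟩]
            decide
          · rw [if_neg h1]
            by_cases h3 : ∃ u w, E u w ∧ E w y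
            · rw [if_pos h3]; decide
            · rw [if_neg h3, if_pos ⟨x, hxy⟩]; decide
      have hlt : ∀ x y, E x y → (q x).val < (q y).val := hlt0
      refine ⟨q, ?_, ?_⟩
      · intro x y v w hxy hvw hxw hyv
        have l1 := hlt x y hxy
        have l2 := hlt v w hvw
        have c1 := congrArg Fin.val hxw
        have c2 := congrArg Fin.val hyv
        omega
      · intro x y hxy _ hfeq
        have l1 := hlt x y hxy
        have c1 := congrArg Fin.val hfeq
        omega
end

section
/- An irreflexive oriented graph G has an ios-injective homomorphism to the transitive tournament T_2 if and only if none of H_3, H_3^c and P_3 is a subgraph of G, that is, if and only if G contains no oriented path on three vertices. -/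
/-!
A homomorphism to `T_2` sends every arc to `t_0 t_1`, so it exists exactly when no vertex is both
the head and the tail of an arc, i.e. when there is no directed path `x → y → z`; with only two
colours, ios-injectivity then says that in- and out-neighbourhoods have at most one vertex. In a
loopless oriented graph these three conditions mean that `P_3`, `H_3` and `H_3^c` are not
subgraphs, and these are precisely the orientations of a path on three vertices.
-/

lemma injective_vec3 {V : Type} {a b c : V} (hab : a ≠ b) (hac : a ≠ c) (hbc : b ≠ c) :
    Function.Injective ![a, b, c] := by
  intro i j hij
  fin_cases i <;> fin_cases j <;> simp_all [eq_comm]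

lemma Subg.trans {A B C : Type} {R : A → A → Prop} {S : B → B → Prop} {T : C → C → Prop}
    (hRS : Subg R S) (hST : Subg S T) : Subg R T :=
  let ⟨f, hf, hfhom⟩ := hRS
  let ⟨g, hg, hghom⟩ := hST
  ⟨g ∘ f, hg.comp hf, fun x y h => hghom _ _ (hfhom x y h)⟩

lemma subg_convRel_iff {A B : Type} {R : A → A → Prop} {S : B → B → Prop} :
    Subg (convRel R) S ↔ Subg R (convRel S) :=
  exists_congr fun _ => and_congr_right fun _ =>
    ⟨fun h x y hxy => h y x hxy, fun h x y hxy => h y x hxy⟩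

section ThreeVertexSubgraphs

variable {V : Type} {E : V → V → Prop}

lemma subg_H3rel_iff (hirr : NoLoops E) : Subg H3rel E ↔ ∃ x, {y | E y x}.Nontrivial := by
  constructor
  · rintro ⟨g, hg, hhom⟩
    exact ⟨g 1, g 0, hhom 0 1 (Or.inl ⟨rfl, rfl⟩), g 2, hhom 2 1 (Or.inr ⟨rfl, rfl⟩),
      fun h => absurd (hg h) (by decide)⟩
  · rintro ⟨x, a, hax, b, hbx, hab⟩
    have hne {y} (hyx : E y x) : y ≠ x := fun h => hirr x (h ▸ hyx)
    refine ⟨![a, x, b], injective_vec3 (hne hax) hab (hne hbx).symm, ?_⟩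
    rintro i j (⟨rfl, rfl⟩ | ⟨rfl, rfl⟩) <;> assumption

lemma subg_convRel_H3rel_iff (hirr : NoLoops E) :
    Subg (convRel H3rel) E ↔ ∃ x, {y | E x y}.Nontrivial :=
  subg_convRel_iff.trans (subg_H3rel_iff (E := convRel E) hirr)

lemma subg_DPathRel_three_iff (hor : IsOriented E) (hirr : NoLoops E) :
    Subg (DPathRel 3) E ↔ ∃ x y z, E x y ∧ E y z := by
  constructor
  · rintro ⟨g, -, hhom⟩
    exact ⟨g 0, g 1, g 2, hhom 0 1 rfl, hhom 1 2 rfl⟩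
  · rintro ⟨x, y, z, hxy, hyz⟩
    have hne {u v} (huv : E u v) : u ≠ v := fun h => hirr v (h ▸ huv)
    have hxz : x ≠ z := by
      rintro rfl
      exact hor x y (hne hxy) ⟨hxy, hyz⟩
    refine ⟨![x, y, z], injective_vec3 (hne hxy) hxz (hne hyz), ?_⟩
    intro i j hij
    fin_cases i <;> fin_cases j <;> simp_all [DPathRel]

end ThreeVertexSubgraphs

lemma exists_hom_TTrel_two_iosInj_iff {V : Type} (E : V → V → Prop) :
    (∃ f : V → Fin 2, IsHom E (TTrel 2) f ∧ IosInj E f) ↔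
      (∀ x y z, E x y → ¬ E y z) ∧ (∀ x, {y | E y x}.Subsingleton) ∧
        (∀ x, {y | E x y}.Subsingleton) := by
  constructor
  · rintro ⟨f, hhom, hinj⟩
    have hlt {u v} (huv : E u v) : f u < f v := hhom u v huv
    refine ⟨fun x y z hxy hyz => ?_, fun x a ha b hb => ?_, fun x a ha b hb => ?_⟩
    · have := hlt hxy; have := hlt hyz; omega
    · exact (hinj x).1 ha hb (by have := hlt ha; have := hlt hb; omega)
    · exact (hinj x).2 ha hb (by have := hlt ha; have := hlt hb; omega)
  · rintro ⟨hpath, hin, hout⟩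
    classical
    refine ⟨fun v => if ∃ u, E u v then 1 else 0, fun x y hxy => ?_,
      fun x => ⟨(hin x).injOn _, (hout x).injOn _⟩⟩
    have hx : ¬ ∃ u, E u x := fun ⟨u, hux⟩ => hpath u x y hux hxy
    have hy : ∃ u, E u y := ⟨x, hxy⟩
    simp [TTrel, hx, hy]

lemma oPathRel_two_iff (σ : ℕ → Bool) (x y : Fin 3) :
    OPathRel 2 σ x y ↔
      (σ 0 = true ∧ x = 0 ∧ y = 1) ∨ (σ 0 = false ∧ x = 1 ∧ y = 0) ∨
      (σ 1 = true ∧ x = 1 ∧ y = 2) ∨ (σ 1 = false ∧ x = 2 ∧ y = 1) := by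
  simp only [OPathRel, show ∀ t, t < 2 ↔ t = 0 ∨ t = 1 by omega, or_and_right, exists_or,
    exists_eq_left]
  fin_cases x <;> fin_cases y <;> simp

lemma exists_subg_OPathRel_two_iff {V : Type} (E : V → V → Prop) :
    (∃ σ : ℕ → Bool, Subg (OPathRel 2 σ) E) ↔
      Subg H3rel E ∨ Subg (convRel H3rel) E ∨ Subg (DPathRel 3) E := by
  constructor
  · rintro ⟨σ, hsub⟩
    cases h0 : σ 0 <;> cases h1 : σ 1
    · refine .inr (.inr (.trans ⟨Fin.rev, Fin.rev_injective, fun x y h => ?_⟩ hsub))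
      fin_cases x <;> fin_cases y <;> simp_all [DPathRel, oPathRel_two_iff]
    · refine .inr (.inl (.trans ⟨id, Function.injective_id, fun x y h => ?_⟩ hsub))
      fin_cases x <;> fin_cases y <;> simp_all [convRel, H3rel, oPathRel_two_iff]
    · refine .inl (.trans ⟨id, Function.injective_id, fun x y h => ?_⟩ hsub)
      fin_cases x <;> fin_cases y <;> simp_all [H3rel, oPathRel_two_iff]
    · refine .inr (.inr (.trans ⟨id, Function.injective_id, fun x y h => ?_⟩ hsub))
      fin_cases x <;> fin_cases y <;> simp_all [DPathRel, oPathRel_two_iff]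
  · rintro (hsub | hsub | hsub)
    · refine ⟨fun t => decide (t = 0),
        .trans ⟨id, Function.injective_id, fun x y h => ?_⟩ hsub⟩
      fin_cases x <;> fin_cases y <;> simp_all [H3rel, oPathRel_two_iff]
    · refine ⟨fun t => decide (t = 1),
        .trans ⟨id, Function.injective_id, fun x y h => ?_⟩ hsub⟩
      fin_cases x <;> fin_cases y <;> simp_all [convRel, H3rel, oPathRel_two_iff]
    · refine ⟨fun _ => true, .trans ⟨id, Function.injective_id, fun x y h => ?_⟩ hsub⟩
      fin_cases x <;> fin_cases y <;> simp_all [DPathRel, oPathRel_two_iff]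

/-- An irreflexive oriented graph `G` has an ios-injective homomorphism
to `T_2` iff none of `H_3`, `H_3^c`, `P_3` is a subgraph of `G`, that is, iff `G`
contains no oriented path on three vertices. -/
theorem stmt5 {V : Type} (E : V → V → Prop) (hor : IsOriented E) (hirr : NoLoops E) :
    ((∃ f : V → Fin 2, IsHom E (TTrel 2) f ∧ IosInj E f) ↔
        ¬ (Subg H3rel E ∨ Subg (convRel H3rel) E ∨ Subg (DPathRel 3) E)) ∧
    (¬ (Subg H3rel E ∨ Subg (convRel H3rel) E ∨ Subg (DPathRel 3) E) ↔
        ¬ ∃ σ : ℕ → Bool, Subg (OPathRel 2 σ) E) := by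
  refine ⟨?_, (exists_subg_OPathRel_two_iff E).not.symm⟩
  rw [exists_hom_TTrel_two_iosInj_iff, subg_H3rel_iff hirr, subg_convRel_H3rel_iff hirr,
    subg_DPathRel_three_iff hor hirr]
  simp only [not_or, not_exists, not_and, Set.not_nontrivial_iff]
  tauto
end

section
/- A finite irreflexive oriented graph G has an ios-injective homomorphism to the transitive tournament T_3 if and only if none of P_4, H_4, H_4^c, H_5, H_5^c, A_4, A_4^c, B_2 and B_2^c has an ios-injective homomorphism to G. -/
namespace Stmt7Aux

variable {V : Type}

/-! ### Composition and converse machinery -/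

lemma compIos {A : Type} {R : A → A → Prop} {E : V → V → Prop} {B : Type} {S : B → B → Prop}
    (h : IosHomEx R E) (hf : ∃ f : V → B, IsHom E S f ∧ IosInj E f) : IosHomEx R S := by
  obtain ⟨g, hg, hgi⟩ := h
  obtain ⟨f, hf, hfi⟩ := hf
  refine ⟨f ∘ g, fun x y h => hf _ _ (hg x y h), fun x => ⟨?_, ?_⟩⟩
  · intro p hp q hq hpq
    exact (hgi x).1 hp hq ((hfi (g x)).1 (hg p x hp) (hg q x hq) hpq)
  · intro p hp q hq hpq
    exact (hgi x).2 hp hq ((hfi (g x)).2 (hg x p hp) (hg x q hq) hpq)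

lemma iosConv {A : Type} {R : A → A → Prop} {E : V → V → Prop} :
    IosHomEx (convRel R) E ↔ IosHomEx R (convRel E) := by
  constructor <;> rintro ⟨g, hg, hgi⟩ <;>
    exact ⟨g, fun x y h => hg y x h, fun x => ⟨(hgi x).2, (hgi x).1⟩⟩


lemma noP4T3 : ¬ IosHomEx (DPathRel 4) (TTrel 3) := by
  rintro ⟨g, hg, -⟩
  have h1 : (g 0).val < (g 1).val := hg 0 1 rfl
  have h2 : (g 1).val < (g 2).val := hg 1 2 rfl
  have h3 : (g 2).val < (g 3).val := hg 2 3 rfl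
  have := (g 3).isLt
  omega

lemma noH4T3 : ¬ IosHomEx H4rel (TTrel 3) := by
  rintro ⟨g, hg, hgi⟩
  have h0 : (g 0).val < (g 3).val := hg 0 3 ⟨Or.inl rfl, rfl⟩
  have h1 : (g 1).val < (g 3).val := hg 1 3 ⟨Or.inr (Or.inl rfl), rfl⟩
  have h2 : (g 2).val < (g 3).val := hg 2 3 ⟨Or.inr (Or.inr rfl), rfl⟩
  have m0 : (0 : Fin 4) ∈ {y | H4rel y 3} := ⟨Or.inl rfl, rfl⟩
  have m1 : (1 : Fin 4) ∈ {y | H4rel y 3} := ⟨Or.inr (Or.inl rfl), rfl⟩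
  have m2 : (2 : Fin 4) ∈ {y | H4rel y 3} := ⟨Or.inr (Or.inr rfl), rfl⟩
  have i01 : (g 0).val ≠ (g 1).val := fun hh =>
    absurd ((hgi 3).1 m0 m1 (Fin.ext hh)) (by decide)
  have i02 : (g 0).val ≠ (g 2).val := fun hh =>
    absurd ((hgi 3).1 m0 m2 (Fin.ext hh)) (by decide)
  have i12 : (g 1).val ≠ (g 2).val := fun hh =>
    absurd ((hgi 3).1 m1 m2 (Fin.ext hh)) (by decide)
  have := (g 3).isLt
  omega

lemma noA4T3 : ¬ IosHomEx A4rel (TTrel 3) := by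
  rintro ⟨g, hg, hgi⟩
  have h0 : (g 0).val < (g 2).val := hg 0 2 (Or.inl ⟨Or.inl rfl, rfl⟩)
  have h1 : (g 1).val < (g 2).val := hg 1 2 (Or.inl ⟨Or.inr rfl, rfl⟩)
  have h2 : (g 2).val < (g 3).val := hg 2 3 (Or.inr ⟨rfl, rfl⟩)
  have m0 : (0 : Fin 4) ∈ {y | A4rel y 2} := Or.inl ⟨Or.inl rfl, rfl⟩
  have m1 : (1 : Fin 4) ∈ {y | A4rel y 2} := Or.inl ⟨Or.inr rfl, rfl⟩
  have i01 : (g 0).val ≠ (g 1).val := fun hh =>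
    absurd ((hgi 2).1 m0 m1 (Fin.ext hh)) (by decide)
  have := (g 3).isLt
  omega

lemma noH5T3 : ¬ IosHomEx H5rel (TTrel 3) := by
  rintro ⟨g, hg, hgi⟩
  have h01 : (g 0).val < (g 1).val := hg 0 1 (Or.inl ⟨rfl, rfl⟩)
  have h12 : (g 1).val < (g 2).val := hg 1 2 (Or.inr (Or.inl ⟨rfl, rfl⟩))
  have h03 : (g 0).val < (g 3).val := hg 0 3 (Or.inr (Or.inr (Or.inl ⟨rfl, rfl⟩)))
  have h34 : (g 3).val < (g 4).val := hg 3 4 (Or.inr (Or.inr (Or.inr ⟨rfl, rfl⟩)))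
  have m1 : (1 : Fin 5) ∈ {y | H5rel 0 y} := Or.inl ⟨rfl, rfl⟩
  have m3 : (3 : Fin 5) ∈ {y | H5rel 0 y} := Or.inr (Or.inr (Or.inl ⟨rfl, rfl⟩))
  have i13 : (g 1).val ≠ (g 3).val := fun hh =>
    absurd ((hgi 0).2 m1 m3 (Fin.ext hh)) (by decide)
  have := (g 2).isLt
  have := (g 4).isLt
  omega

lemma noB2T3 : ¬ IosHomEx B2rel (TTrel 3) := by
  rintro ⟨g, hg, hgi⟩
  have h01 : (g 0).val < (g 1).val := hg 0 1 (Or.inl ⟨rfl, rfl⟩)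
  have h21 : (g 2).val < (g 1).val := hg 2 1 (Or.inr (Or.inl ⟨rfl, rfl⟩))
  have h23 : (g 2).val < (g 3).val := hg 2 3 (Or.inr (Or.inr (Or.inl ⟨rfl, rfl⟩)))
  have h43 : (g 4).val < (g 3).val := hg 4 3 (Or.inr (Or.inr (Or.inr ⟨rfl, rfl⟩)))
  have m0 : (0 : Fin 5) ∈ {y | B2rel y 1} := Or.inl ⟨rfl, rfl⟩
  have m2 : (2 : Fin 5) ∈ {y | B2rel y 1} := Or.inr (Or.inl ⟨rfl, rfl⟩)
  have i02 : (g 0).val ≠ (g 2).val := fun hh =>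
    absurd ((hgi 1).1 m0 m2 (Fin.ext hh)) (by decide)
  have m1' : (1 : Fin 5) ∈ {y | B2rel 2 y} := Or.inr (Or.inl ⟨rfl, rfl⟩)
  have m3' : (3 : Fin 5) ∈ {y | B2rel 2 y} := Or.inr (Or.inr (Or.inl ⟨rfl, rfl⟩))
  have i13 : (g 1).val ≠ (g 3).val := fun hh =>
    absurd ((hgi 2).2 m1' m3' (Fin.ext hh)) (by decide)
  have m2'' : (2 : Fin 5) ∈ {y | B2rel y 3} := Or.inr (Or.inr (Or.inl ⟨rfl, rfl⟩))
  have m4'' : (4 : Fin 5) ∈ {y | B2rel y 3} := Or.inr (Or.inr (Or.inr ⟨rfl, rfl⟩))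
  have i24 : (g 2).val ≠ (g 4).val := fun hh =>
    absurd ((hgi 3).1 m2'' m4'' (Fin.ext hh)) (by decide)
  omega


variable {V : Type} {E : V → V → Prop}

lemma mkP4 (h : ¬ IosHomEx (DPathRel 4) E) :
    ∀ ⦃a b c d : V⦄, E a b → E b c → E c d → False := by
  intro a b c d h1 h2 h3
  apply h
  refine ⟨![a, b, c, d], ?_, ?_⟩
  · intro p q hpq
    fin_cases p <;> fin_cases q <;> simp_all [DPathRel]
  · intro z
    constructor <;> intro p hp q hq hpq <;>
      simp only [Set.mem_setOf_eq, DPathRel] at hp hq <;>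
      exact Fin.ext (by omega)

lemma mkH4 (h : ¬ IosHomEx H4rel E) :
    ∀ ⦃x a b c : V⦄, E a x → E b x → E c x → a = b ∨ a = c ∨ b = c := by
  intro x a b c ha hb hc
  by_contra hcon
  push_neg at hcon
  obtain ⟨hab, hac, hbc⟩ := hcon
  apply h
  refine ⟨![a, b, c, x], ?_, ?_⟩
  · intro p q hpq
    fin_cases p <;> fin_cases q <;> simp_all [H4rel]
  · intro z
    constructor <;> intro p hp q hq hpq <;>
      simp only [Set.mem_setOf_eq, H4rel] at hp hq <;>
      fin_cases z <;> fin_cases p <;> fin_cases q <;> simp_all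

lemma mkA4 (h : ¬ IosHomEx A4rel E) :
    ∀ ⦃x a b c : V⦄, E a x → E b x → a ≠ b → E x c → False := by
  intro x a b c ha hb hab hc
  apply h
  refine ⟨![a, b, x, c], ?_, ?_⟩
  · intro p q hpq
    fin_cases p <;> fin_cases q <;> simp_all [A4rel]
  · intro z
    constructor <;> intro p hp q hq hpq <;>
      simp only [Set.mem_setOf_eq, A4rel] at hp hq <;>
      fin_cases z <;> fin_cases p <;> fin_cases q <;> simp_all

lemma mkH5 (h : ¬ IosHomEx H5rel E) :
    ∀ ⦃v a b p q : V⦄, E v a → E v b → a ≠ b → E a p → E b q → False := by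
  intro v a b p q h1 h2 hab h3 h4
  apply h
  refine ⟨![v, a, p, b, q], ?_, ?_⟩
  · intro r s hrs
    fin_cases r <;> fin_cases s <;> simp_all [H5rel]
  · intro z
    constructor <;> intro r hr s hs hrs <;>
      simp only [Set.mem_setOf_eq, H5rel] at hr hs <;>
      fin_cases z <;> fin_cases r <;> fin_cases s <;> simp_all

lemma mkB2 (h : ¬ IosHomEx B2rel E) :
    ∀ ⦃c b d a e : V⦄, E c b → E c d → b ≠ d → E a b → a ≠ c → E e d → e ≠ c → False := by
  intro c b d a e h1 h2 hbd h3 hac h4 hec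
  apply h
  refine ⟨![a, b, c, d, e], ?_, ?_⟩
  · intro r s hrs
    fin_cases r <;> fin_cases s <;> simp_all [B2rel]
  · intro z
    constructor <;> intro r hr s hs hrs <;>
      simp only [Set.mem_setOf_eq, B2rel] at hr hs <;>
      fin_cases z <;> fin_cases r <;> fin_cases s <;> simp_all


variable {V : Type}

def hasIn (E : V → V → Prop) (x : V) : Prop := ∃ y, E y x
def hasOut (E : V → V → Prop) (x : V) : Prop := ∃ y, E x y
def twoIn (E : V → V → Prop) (x : V) : Prop := ∃ y z, y ≠ z ∧ E y x ∧ E z x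
def twoOut (E : V → V → Prop) (x : V) : Prop := ∃ y z, y ≠ z ∧ E x y ∧ E x z

open scoped Classical in
noncomputable def pickIn (E : V → V → Prop) (y : V) : V :=
  if h : ∃ u, E u y then h.choose else y

open scoped Classical in
noncomputable def pickOut (E : V → V → Prop) (y : V) : V :=
  if h : ∃ u, E y u then h.choose else y

lemma pickIn_spec {E : V → V → Prop} {y : V} (h : ∃ u, E u y) : E (pickIn E y) y := by
  rw [pickIn, dif_pos h]; exact h.choose_spec

lemma pickOut_spec {E : V → V → Prop} {y : V} (h : ∃ u, E y u) : E y (pickOut E y) := by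
  rw [pickOut, dif_pos h]; exact h.choose_spec

open scoped Classical in
noncomputable def col (E : V → V → Prop) (x : V) : Fin 3 :=
  if twoIn E x then 2
  else if twoOut E x then 0
  else if hasIn E x ∧ hasOut E x then 1
  else if hasOut E x then
    (if ∃ y, E x y ∧ hasOut E y then 0
     else if ∃ y w, E x y ∧ E w y ∧ w ≠ x ∧ hasIn E w then 0
     else if ∃ y w, E x y ∧ E w y ∧ w ≠ x ∧ twoOut E w then 1
     else if ∃ y w, E x y ∧ E w y ∧ w ≠ x then
       (if ∃ y, E x y ∧ pickIn E y = x then 0 else 1)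
     else 0)
  else if hasIn E x then
    (if ∃ w, E w x ∧ hasIn E w then 2
     else if ∃ w z, E w x ∧ E w z ∧ z ≠ x ∧ hasOut E z then 2
     else if ∃ w z, E w x ∧ E w z ∧ z ≠ x ∧ twoIn E z then 1
     else if ∃ w z, E w x ∧ E w z ∧ z ≠ x then
       (if ∃ w, E w x ∧ pickOut E w = x then 2 else 1)
     else 2)
  else 0

variable {E : V → V → Prop}

lemma col_twoIn {x : V} (h : twoIn E x) : col E x = 2 := by
  unfold col; rw [if_pos h]

lemma col_twoOut {x : V} (h1 : ¬ twoIn E x) (h : twoOut E x) : col E x = 0 := by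
  unfold col; rw [if_neg h1, if_pos h]

lemma col_mid {x : V} (h1 : ¬ twoIn E x) (h2 : ¬ twoOut E x) (h3 : hasIn E x)
    (h4 : hasOut E x) : col E x = 1 := by
  unfold col; rw [if_neg h1, if_neg h2, if_pos ⟨h3, h4⟩]

open scoped Classical in
lemma col_src {x : V} (h1 : ¬ twoIn E x) (h2 : ¬ twoOut E x) (h3 : ¬ hasIn E x)
    (h4 : hasOut E x) : col E x =
    (if ∃ y, E x y ∧ hasOut E y then 0
     else if ∃ y w, E x y ∧ E w y ∧ w ≠ x ∧ hasIn E w then 0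
     else if ∃ y w, E x y ∧ E w y ∧ w ≠ x ∧ twoOut E w then 1
     else if ∃ y w, E x y ∧ E w y ∧ w ≠ x then
       (if ∃ y, E x y ∧ pickIn E y = x then 0 else 1)
     else 0) := by
  unfold col; rw [if_neg h1, if_neg h2, if_neg (fun h => h3 h.1), if_pos h4]

open scoped Classical in
lemma col_snk {x : V} (h1 : ¬ twoIn E x) (h2 : ¬ twoOut E x) (h3 : hasIn E x)
    (h4 : ¬ hasOut E x) : col E x =
    (if ∃ w, E w x ∧ hasIn E w then 2
     else if ∃ w z, E w x ∧ E w z ∧ z ≠ x ∧ hasOut E z then 2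
     else if ∃ w z, E w x ∧ E w z ∧ z ≠ x ∧ twoIn E z then 1
     else if ∃ w z, E w x ∧ E w z ∧ z ≠ x then
       (if ∃ w, E w x ∧ pickOut E w = x then 2 else 1)
     else 2) := by
  unfold col; rw [if_neg h1, if_neg h2, if_neg (fun h => h4 h.2), if_neg h4, if_pos h3]

/-- Any vertex with an out-neighbour gets colour 0 or 1. -/
lemma colA (hA4 : ∀ ⦃x a b c : V⦄, E a x → E b x → a ≠ b → E x c → False)
    {u : V} (hu : hasOut E u) : col E u = 0 ∨ col E u = 1 := by
  have h2 : ¬ twoIn E u := fun ⟨y, z, hyz, ha, hb⟩ => hu.elim fun c hc => hA4 ha hb hyz hc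
  by_cases h3 : twoOut E u
  · exact Or.inl (col_twoOut h2 h3)
  by_cases h4 : hasIn E u
  · exact Or.inr (col_mid h2 h3 h4 hu)
  · rw [col_src h2 h3 h4 hu]
    split_ifs <;> simp

/-- Any vertex with an in-neighbour gets colour 1 or 2. -/
lemma colB (hA4c : ∀ ⦃x a b c : V⦄, E x a → E x b → a ≠ b → E c x → False)
    {v : V} (hv : hasIn E v) : col E v = 1 ∨ col E v = 2 := by
  have h2 : ¬ twoOut E v := fun ⟨y, z, hyz, ha, hb⟩ => hv.elim fun c hc => hA4c ha hb hyz hc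
  by_cases h1 : twoIn E v
  · exact Or.inr (col_twoIn h1)
  by_cases h4 : hasOut E v
  · exact Or.inl (col_mid h1 h2 hv h4)
  · rw [col_snk h1 h2 hv h4]
    split_ifs <;> simp


variable {V : Type} {E : V → V → Prop}

private lemma src_aux (hA4 : ∀ ⦃x a b c : V⦄, E a x → E b x → a ≠ b → E x c → False)
    (hIn3 : ∀ ⦃x a b c : V⦄, E a x → E b x → E c x → a = b ∨ a = c ∨ b = c)
    {s o y : V} (hsy : E s y) (hoy : E o y) (hos : o ≠ s)
    (hnTOs : ¬ twoOut E s) (hnIs : ¬ hasIn E s) :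
    (¬ twoIn E s) ∧ (¬ ∃ y', E s y' ∧ hasOut E y') ∧
    (∀ ⦃z⦄, E s z → z = y) ∧ (∀ ⦃w⦄, E w y → w ≠ s → w = o) := by
  have hso : s ≠ o := fun h => hos h.symm
  have uniq : ∀ ⦃z⦄, E s z → z = y := by
    intro z hz
    by_contra hzy
    exact hnTOs ⟨z, y, hzy, hz, hsy⟩
  have hnOy : ¬ hasOut E y := fun ⟨c, hc⟩ => hA4 hsy hoy hso hc
  refine ⟨fun ⟨p, q, hpq, h1, h2⟩ => hnIs ⟨p, h1⟩, ?_, uniq, ?_⟩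
  · rintro ⟨y', h1, h2⟩
    exact hnOy ((uniq h1) ▸ h2)
  · intro w hw hws
    rcases hIn3 hw hsy hoy with h | h | h
    · exact absurd h hws
    · exact h
    · exact absurd h hso

private lemma colSrc0 (hA4 : ∀ ⦃x a b c : V⦄, E a x → E b x → a ≠ b → E x c → False)
    (hIn3 : ∀ ⦃x a b c : V⦄, E a x → E b x → E c x → a = b ∨ a = c ∨ b = c)
    {s o y : V} (hsy : E s y) (hoy : E o y) (hos : o ≠ s)
    (hnTOs : ¬ twoOut E s) (hnIs : ¬ hasIn E s) (hIo : hasIn E o) : col E s = 0 := by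
  obtain ⟨hnTI, hs1, uniq, inuniq⟩ := src_aux hA4 hIn3 hsy hoy hos hnTOs hnIs
  rw [col_src hnTI hnTOs hnIs ⟨y, hsy⟩, if_neg hs1,
    if_pos ⟨y, o, hsy, hoy, hos, hIo⟩]

private lemma colSrc1 (hA4 : ∀ ⦃x a b c : V⦄, E a x → E b x → a ≠ b → E x c → False)
    (hIn3 : ∀ ⦃x a b c : V⦄, E a x → E b x → E c x → a = b ∨ a = c ∨ b = c)
    {s o y : V} (hsy : E s y) (hoy : E o y) (hos : o ≠ s)
    (hnTOs : ¬ twoOut E s) (hnIs : ¬ hasIn E s)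
    (hnIo : ¬ hasIn E o) (hTOo : twoOut E o) : col E s = 1 := by
  obtain ⟨hnTI, hs1, uniq, inuniq⟩ := src_aux hA4 hIn3 hsy hoy hos hnTOs hnIs
  rw [col_src hnTI hnTOs hnIs ⟨y, hsy⟩, if_neg hs1]
  rw [if_neg ?_, if_pos ⟨y, o, hsy, hoy, hos, hTOo⟩]
  rintro ⟨y', w, h1, h2, h3, h4⟩
  exact hnIo ((inuniq ((uniq h1) ▸ h2) h3) ▸ h4)

open scoped Classical in
private lemma colSrcPick (hA4 : ∀ ⦃x a b c : V⦄, E a x → E b x → a ≠ b → E x c → False)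
    (hIn3 : ∀ ⦃x a b c : V⦄, E a x → E b x → E c x → a = b ∨ a = c ∨ b = c)
    {s o y : V} (hsy : E s y) (hoy : E o y) (hos : o ≠ s)
    (hnTOs : ¬ twoOut E s) (hnIs : ¬ hasIn E s)
    (hnIo : ¬ hasIn E o) (hnTOo : ¬ twoOut E o) :
    col E s = if pickIn E y = s then 0 else 1 := by
  obtain ⟨hnTI, hs1, uniq, inuniq⟩ := src_aux hA4 hIn3 hsy hoy hos hnTOs hnIs
  rw [col_src hnTI hnTOs hnIs ⟨y, hsy⟩, if_neg hs1]
  rw [if_neg ?_, if_neg ?_, if_pos ⟨y, o, hsy, hoy, hos⟩]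
  · by_cases hp : pickIn E y = s
    · rw [if_pos hp, if_pos ⟨y, hsy, hp⟩]
    · rw [if_neg hp, if_neg ?_]
      rintro ⟨y', h1, h2⟩
      exact hp ((uniq h1) ▸ h2)
  · rintro ⟨y', w, h1, h2, h3, h4⟩
    exact hnTOo ((inuniq ((uniq h1) ▸ h2) h3) ▸ h4)
  · rintro ⟨y', w, h1, h2, h3, h4⟩
    exact hnIo ((inuniq ((uniq h1) ▸ h2) h3) ▸ h4)

private lemma snk_aux (hA4c : ∀ ⦃x a b c : V⦄, E x a → E x b → a ≠ b → E c x → False)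
    (hOut3 : ∀ ⦃x a b c : V⦄, E x a → E x b → E x c → a = b ∨ a = c ∨ b = c)
    {s o v : V} (hvs : E v s) (hvo : E v o) (hos : o ≠ s)
    (hnTIs : ¬ twoIn E s) (hnOs : ¬ hasOut E s) :
    (¬ twoOut E s) ∧ (¬ ∃ w, E w s ∧ hasIn E w) ∧
    (∀ ⦃w⦄, E w s → w = v) ∧ (∀ ⦃z⦄, E v z → z ≠ s → z = o) := by
  have hso : s ≠ o := fun h => hos h.symm
  have uniq : ∀ ⦃w⦄, E w s → w = v := by
    intro w hw
    by_contra hwv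
    exact hnTIs ⟨w, v, hwv, hw, hvs⟩
  have hnIv : ¬ hasIn E v := fun ⟨c, hc⟩ => hA4c hvs hvo hso hc
  refine ⟨fun ⟨p, q, hpq, h1, h2⟩ => hnOs ⟨p, h1⟩, ?_, uniq, ?_⟩
  · rintro ⟨w, h1, h2⟩
    exact hnIv ((uniq h1) ▸ h2)
  · intro z hz hzs
    rcases hOut3 hz hvs hvo with h | h | h
    · exact absurd h hzs
    · exact h
    · exact absurd h hso

private lemma colSnk2 (hA4c : ∀ ⦃x a b c : V⦄, E x a → E x b → a ≠ b → E c x → False)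
    (hOut3 : ∀ ⦃x a b c : V⦄, E x a → E x b → E x c → a = b ∨ a = c ∨ b = c)
    {s o v : V} (hvs : E v s) (hvo : E v o) (hos : o ≠ s)
    (hnTIs : ¬ twoIn E s) (hnOs : ¬ hasOut E s) (hOo : hasOut E o) : col E s = 2 := by
  obtain ⟨hnTO, hs1, uniq, outuniq⟩ := snk_aux hA4c hOut3 hvs hvo hos hnTIs hnOs
  rw [col_snk hnTIs hnTO ⟨v, hvs⟩ hnOs, if_neg hs1,
    if_pos ⟨v, o, hvs, hvo, hos, hOo⟩]

private lemma colSnk1 (hA4c : ∀ ⦃x a b c : V⦄, E x a → E x b → a ≠ b → E c x → False)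
    (hOut3 : ∀ ⦃x a b c : V⦄, E x a → E x b → E x c → a = b ∨ a = c ∨ b = c)
    {s o v : V} (hvs : E v s) (hvo : E v o) (hos : o ≠ s)
    (hnTIs : ¬ twoIn E s) (hnOs : ¬ hasOut E s)
    (hnOo : ¬ hasOut E o) (hTIo : twoIn E o) : col E s = 1 := by
  obtain ⟨hnTO, hs1, uniq, outuniq⟩ := snk_aux hA4c hOut3 hvs hvo hos hnTIs hnOs
  rw [col_snk hnTIs hnTO ⟨v, hvs⟩ hnOs, if_neg hs1]
  rw [if_neg ?_, if_pos ⟨v, o, hvs, hvo, hos, hTIo⟩]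
  rintro ⟨w, z, h1, h2, h3, h4⟩
  exact hnOo ((outuniq ((uniq h1) ▸ h2) h3) ▸ h4)

open scoped Classical in
private lemma colSnkPick (hA4c : ∀ ⦃x a b c : V⦄, E x a → E x b → a ≠ b → E c x → False)
    (hOut3 : ∀ ⦃x a b c : V⦄, E x a → E x b → E x c → a = b ∨ a = c ∨ b = c)
    {s o v : V} (hvs : E v s) (hvo : E v o) (hos : o ≠ s)
    (hnTIs : ¬ twoIn E s) (hnOs : ¬ hasOut E s)
    (hnOo : ¬ hasOut E o) (hnTIo : ¬ twoIn E o) :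
    col E s = if pickOut E v = s then 2 else 1 := by
  obtain ⟨hnTO, hs1, uniq, outuniq⟩ := snk_aux hA4c hOut3 hvs hvo hos hnTIs hnOs
  rw [col_snk hnTIs hnTO ⟨v, hvs⟩ hnOs, if_neg hs1]
  rw [if_neg ?_, if_neg ?_, if_pos ⟨v, o, hvs, hvo, hos⟩]
  · by_cases hp : pickOut E v = s
    · rw [if_pos hp, if_pos ⟨v, hvs, hp⟩]
    · rw [if_neg hp, if_neg ?_]
      rintro ⟨w, h1, h2⟩
      exact hp ((uniq h1) ▸ h2)
  · rintro ⟨w, z, h1, h2, h3, h4⟩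
    exact hnTIo ((outuniq ((uniq h1) ▸ h2) h3) ▸ h4)
  · rintro ⟨w, z, h1, h2, h3, h4⟩
    exact hnOo ((outuniq ((uniq h1) ▸ h2) h3) ▸ h4)


variable {V : Type} {E : V → V → Prop}

lemma colHom (hP4 : ∀ ⦃a b c d : V⦄, E a b → E b c → E c d → False)
    (hA4 : ∀ ⦃x a b c : V⦄, E a x → E b x → a ≠ b → E x c → False)
    (hA4c : ∀ ⦃x a b c : V⦄, E x a → E x b → a ≠ b → E c x → False)
    {u v : V} (huv : E u v) : col E u < col E v := by
  have hOu : hasOut E u := ⟨v, huv⟩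
  have hIv : hasIn E v := ⟨u, huv⟩
  have hnTIu : ¬ twoIn E u := fun ⟨p, q, hpq, h1, h2⟩ => hA4 h1 h2 hpq huv
  have hnTOv : ¬ twoOut E v := fun ⟨p, q, hpq, h1, h2⟩ => hA4c h1 h2 hpq huv
  have fin0 : col E u = 0 → col E u < col E v := by
    intro h0
    rcases colB hA4c hIv with h | h <;> rw [h0, h] <;> decide
  by_cases hTOu : twoOut E u
  · exact fin0 (col_twoOut hnTIu hTOu)
  by_cases hIu : hasIn E u
  · have hcu := col_mid hnTIu hTOu hIu hOu
    have hcv : col E v = 2 := by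
      by_cases hTIv : twoIn E v
      · exact col_twoIn hTIv
      · have hnOv : ¬ hasOut E v := fun ⟨w, hw⟩ => hIu.elim fun p hp => hP4 hp huv hw
        rw [col_snk hTIv hnTOv hIv hnOv, if_pos ⟨u, huv, hIu⟩]
    rw [hcu, hcv]; decide
  · have uniq : ∀ ⦃z⦄, E u z → z = v := by
      intro z hz
      by_contra hzv
      exact hTOu ⟨z, v, hzv, hz, huv⟩
    by_cases s1 : ∃ y, E u y ∧ hasOut E y
    · exact fin0 (by rw [col_src hnTIu hTOu hIu hOu, if_pos s1])
    by_cases s2 : ∃ y w, E u y ∧ E w y ∧ w ≠ u ∧ hasIn E w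
    · exact fin0 (by rw [col_src hnTIu hTOu hIu hOu, if_neg s1, if_pos s2])
    by_cases s3 : ∃ y w, E u y ∧ E w y ∧ w ≠ u ∧ twoOut E w
    · have hcu : col E u = 1 := by
        rw [col_src hnTIu hTOu hIu hOu, if_neg s1, if_neg s2, if_pos s3]
      obtain ⟨y, w, h1, h2, h3, -⟩ := s3
      have hcv : col E v = 2 := col_twoIn ⟨w, u, h3, (uniq h1) ▸ h2, huv⟩
      rw [hcu, hcv]; decide
    by_cases s4 : ∃ y w, E u y ∧ E w y ∧ w ≠ u
    · obtain ⟨y, w, h1, h2, h3⟩ := s4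
      have hcv : col E v = 2 := col_twoIn ⟨w, u, h3, (uniq h1) ▸ h2, huv⟩
      rw [hcv]
      rcases colA hA4 hOu with h | h <;> rw [h] <;> decide
    · exact fin0 (by
        rw [col_src hnTIu hTOu hIu hOu, if_neg s1, if_neg s2, if_neg s3, if_neg s4])

lemma keyB (hIn3 : ∀ ⦃x a b c : V⦄, E a x → E b x → E c x → a = b ∨ a = c ∨ b = c)
    (hA4 : ∀ ⦃x a b c : V⦄, E a x → E b x → a ≠ b → E x c → False)
    (hA4c : ∀ ⦃x a b c : V⦄, E x a → E x b → a ≠ b → E c x → False)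
    (hH5c : ∀ ⦃v a b p q : V⦄, E a v → E b v → a ≠ b → E p a → E q b → False)
    (hB2c : ∀ ⦃c b d a e : V⦄, E b c → E d c → b ≠ d → E b a → a ≠ c → E d e → e ≠ c → False)
    {a b y : V} (hay : E a y) (hby : E b y) (hab : a ≠ b) : col E a ≠ col E b := by
  have hnTIa : ¬ twoIn E a := fun ⟨p, q, hpq, h1, h2⟩ => hA4 h1 h2 hpq hay
  have hnTIb : ¬ twoIn E b := fun ⟨p, q, hpq, h1, h2⟩ => hA4 h1 h2 hpq hby
  have extra : ∀ ⦃c : V⦄, twoOut E c → ∃ z, E c z ∧ z ≠ y := by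
    rintro c ⟨p, q, hpq, h1, h2⟩
    by_cases hp : p = y
    · exact ⟨q, h2, fun h => hpq (by rw [hp, h])⟩
    · exact ⟨p, h1, hp⟩
  by_cases hTa : twoOut E a <;> by_cases hTb : twoOut E b
  · obtain ⟨a2, ha2, ha2y⟩ := extra hTa
    obtain ⟨b2, hb2, hb2y⟩ := extra hTb
    exact (hB2c hay hby hab ha2 ha2y hb2 hb2y).elim
  · have hnIa : ¬ hasIn E a := fun ⟨c, hc⟩ =>
      (let ⟨p, q, hpq, h1, h2⟩ := hTa; hA4c h1 h2 hpq hc)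
    have hca : col E a = 0 := col_twoOut hnTIa hTa
    have hcb : col E b = 1 := by
      by_cases hIb : hasIn E b
      · exact col_mid hnTIb hTb hIb ⟨y, hby⟩
      · exact colSrc1 hA4 hIn3 hby hay hab hTb hIb hnIa hTa
    rw [hca, hcb]; decide
  · have hnIb : ¬ hasIn E b := fun ⟨c, hc⟩ =>
      (let ⟨p, q, hpq, h1, h2⟩ := hTb; hA4c h1 h2 hpq hc)
    have hcb : col E b = 0 := col_twoOut hnTIb hTb
    have hca : col E a = 1 := by
      by_cases hIa : hasIn E a
      · exact col_mid hnTIa hTa hIa ⟨y, hay⟩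
      · exact colSrc1 hA4 hIn3 hay hby (Ne.symm hab) hTa hIa hnIb hTb
    rw [hca, hcb]; decide
  · by_cases hIa : hasIn E a <;> by_cases hIb : hasIn E b
    · obtain ⟨p, hp⟩ := hIa
      obtain ⟨q, hq⟩ := hIb
      exact (hH5c hay hby hab hp hq).elim
    · have hca : col E a = 1 := col_mid hnTIa hTa hIa ⟨y, hay⟩
      have hcb : col E b = 0 := colSrc0 hA4 hIn3 hby hay hab hTb hIb hIa
      rw [hca, hcb]; decide
    · have hcb : col E b = 1 := col_mid hnTIb hTb hIb ⟨y, hby⟩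
      have hca : col E a = 0 := colSrc0 hA4 hIn3 hay hby (Ne.symm hab) hTa hIa hIb
      rw [hca, hcb]; decide
    · have hca := colSrcPick hA4 hIn3 hay hby (Ne.symm hab) hTa hIa hIb hTb
      have hcb := colSrcPick hA4 hIn3 hby hay hab hTb hIb hIa hTa
      have hpy : E (pickIn E y) y := pickIn_spec ⟨a, hay⟩
      rcases hIn3 hpy hay hby with h | h | h
      · rw [hca, hcb, if_pos h, if_neg (fun hh => hab (h.symm.trans hh))]; decide
      · rw [hca, hcb, if_neg (fun hh => hab (hh.symm.trans h)), if_pos h]; decide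
      · exact absurd h hab

lemma keyC (hOut3 : ∀ ⦃x a b c : V⦄, E x a → E x b → E x c → a = b ∨ a = c ∨ b = c)
    (hA4 : ∀ ⦃x a b c : V⦄, E a x → E b x → a ≠ b → E x c → False)
    (hA4c : ∀ ⦃x a b c : V⦄, E x a → E x b → a ≠ b → E c x → False)
    (hH5 : ∀ ⦃v a b p q : V⦄, E v a → E v b → a ≠ b → E a p → E b q → False)
    (hB2 : ∀ ⦃c b d a e : V⦄, E c b → E c d → b ≠ d → E a b → a ≠ c → E e d → e ≠ c → False)
    {a b v : V} (hva : E v a) (hvb : E v b) (hab : a ≠ b) : col E a ≠ col E b := by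
  have hnTOa : ¬ twoOut E a := fun ⟨p, q, hpq, h1, h2⟩ => hA4c h1 h2 hpq hva
  have hnTOb : ¬ twoOut E b := fun ⟨p, q, hpq, h1, h2⟩ => hA4c h1 h2 hpq hvb
  have extra : ∀ ⦃c : V⦄, twoIn E c → ∃ z, E z c ∧ z ≠ v := by
    rintro c ⟨p, q, hpq, h1, h2⟩
    by_cases hp : p = v
    · exact ⟨q, h2, fun h => hpq (by rw [hp, h])⟩
    · exact ⟨p, h1, hp⟩
  by_cases hTa : twoIn E a <;> by_cases hTb : twoIn E b
  · obtain ⟨a2, ha2, ha2v⟩ := extra hTa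
    obtain ⟨b2, hb2, hb2v⟩ := extra hTb
    exact (hB2 hva hvb hab ha2 ha2v hb2 hb2v).elim
  · have hnOa : ¬ hasOut E a := fun ⟨c, hc⟩ =>
      (let ⟨p, q, hpq, h1, h2⟩ := hTa; hA4 h1 h2 hpq hc)
    have hca : col E a = 2 := col_twoIn hTa
    have hcb : col E b = 1 := by
      by_cases hOb : hasOut E b
      · exact col_mid hTb hnTOb ⟨v, hvb⟩ hOb
      · exact colSnk1 hA4c hOut3 hvb hva hab hTb hOb hnOa hTa
    rw [hca, hcb]; decide
  · have hnOb : ¬ hasOut E b := fun ⟨c, hc⟩ =>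
      (let ⟨p, q, hpq, h1, h2⟩ := hTb; hA4 h1 h2 hpq hc)
    have hcb : col E b = 2 := col_twoIn hTb
    have hca : col E a = 1 := by
      by_cases hOa : hasOut E a
      · exact col_mid hTa hnTOa ⟨v, hva⟩ hOa
      · exact colSnk1 hA4c hOut3 hva hvb (Ne.symm hab) hTa hOa hnOb hTb
    rw [hca, hcb]; decide
  · by_cases hOa : hasOut E a <;> by_cases hOb : hasOut E b
    · obtain ⟨p, hp⟩ := hOa
      obtain ⟨q, hq⟩ := hOb
      exact (hH5 hva hvb hab hp hq).elim
    · have hca : col E a = 1 := col_mid hTa hnTOa ⟨v, hva⟩ hOa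
      have hcb : col E b = 2 := colSnk2 hA4c hOut3 hvb hva hab hTb hOb hOa
      rw [hca, hcb]; decide
    · have hcb : col E b = 1 := col_mid hTb hnTOb ⟨v, hvb⟩ hOb
      have hca : col E a = 2 := colSnk2 hA4c hOut3 hva hvb (Ne.symm hab) hTa hOa hOb
      rw [hca, hcb]; decide
    · have hca := colSnkPick hA4c hOut3 hva hvb (Ne.symm hab) hTa hOa hOb hTb
      have hcb := colSnkPick hA4c hOut3 hvb hva hab hTb hOb hOa hTa
      have hpv : E v (pickOut E v) := pickOut_spec ⟨a, hva⟩
      rcases hOut3 hpv hva hvb with h | h | h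
      · rw [hca, hcb, if_pos h, if_neg (fun hh => hab (h.symm.trans hh))]; decide
      · rw [hca, hcb, if_neg (fun hh => hab (hh.symm.trans h)), if_pos h]; decide
      · exact absurd h hab

lemma master (hP4 : ∀ ⦃a b c d : V⦄, E a b → E b c → E c d → False)
    (hIn3 : ∀ ⦃x a b c : V⦄, E a x → E b x → E c x → a = b ∨ a = c ∨ b = c)
    (hOut3 : ∀ ⦃x a b c : V⦄, E x a → E x b → E x c → a = b ∨ a = c ∨ b = c)
    (hA4 : ∀ ⦃x a b c : V⦄, E a x → E b x → a ≠ b → E x c → False)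
    (hA4c : ∀ ⦃x a b c : V⦄, E x a → E x b → a ≠ b → E c x → False)
    (hH5 : ∀ ⦃v a b p q : V⦄, E v a → E v b → a ≠ b → E a p → E b q → False)
    (hH5c : ∀ ⦃v a b p q : V⦄, E a v → E b v → a ≠ b → E p a → E q b → False)
    (hB2 : ∀ ⦃c b d a e : V⦄, E c b → E c d → b ≠ d → E a b → a ≠ c → E e d → e ≠ c → False)
    (hB2c : ∀ ⦃c b d a e : V⦄, E b c → E d c → b ≠ d → E b a → a ≠ c → E d e → e ≠ c → False) :
    ∃ f : V → Fin 3, IsHom E (TTrel 3) f ∧ IosInj E f := by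
  refine ⟨col E, fun u v huv => colHom hP4 hA4 hA4c huv, fun x => ⟨?_, ?_⟩⟩
  · intro p hp q hq hpq
    by_contra hne
    exact keyB hIn3 hA4 hA4c hH5c hB2c hp hq hne hpq
  · intro p hp q hq hpq
    by_contra hne
    exact keyC hOut3 hA4 hA4c hH5 hB2 hp hq hne hpq


def rev3 : Fin 3 → Fin 3 := ![2, 1, 0]

lemma rev3_lt : ∀ i j : Fin 3, i < j → rev3 j < rev3 i := by decide

lemma rev3_inj : Function.Injective rev3 := by decide

lemma revIos {V : Type} {E : V → V → Prop} {f : V → Fin 3}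
    (hf : IsHom E (TTrel 3) f) (hfi : IosInj E f) :
    IsHom (convRel E) (TTrel 3) (rev3 ∘ f) ∧ IosInj (convRel E) (rev3 ∘ f) := by
  constructor
  · intro x y h
    exact rev3_lt _ _ (hf y x h)
  · intro x
    exact ⟨fun p hp q hq h => (hfi x).2 hp hq (rev3_inj h),
      fun p hp q hq h => (hfi x).1 hp hq (rev3_inj h)⟩



end Stmt7Aux

/-- A finite irreflexive oriented graph `G` has an ios-injective
homomorphism to `T_3` iff none of `P_4, H_4, H_4^c, H_5, H_5^c, A_4, A_4^c, B_2, B_2^c`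
has an ios-injective homomorphism to `G`. -/
theorem stmt7 {V : Type} [Fintype V] (E : V → V → Prop)
    (hor : IsOriented E) (hirr : NoLoops E) :
    (∃ f : V → Fin 3, IsHom E (TTrel 3) f ∧ IosInj E f) ↔
      ¬ (IosHomEx (DPathRel 4) E ∨
          IosHomEx H4rel E ∨ IosHomEx (convRel H4rel) E ∨
          IosHomEx H5rel E ∨ IosHomEx (convRel H5rel) E ∨
          IosHomEx A4rel E ∨ IosHomEx (convRel A4rel) E ∨
          IosHomEx B2rel E ∨ IosHomEx (convRel B2rel) E) := by
  open Stmt7Aux in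
  constructor
  · rintro ⟨f, hf, hfi⟩ hbig
    obtain ⟨hfc, hfci⟩ := revIos hf hfi
    have hfe : ∃ g : V → Fin 3, IsHom E (TTrel 3) g ∧ IosInj E g := ⟨f, hf, hfi⟩
    have hfce : ∃ g : V → Fin 3, IsHom (convRel E) (TTrel 3) g ∧ IosInj (convRel E) g :=
      ⟨rev3 ∘ f, hfc, hfci⟩
    rcases hbig with h | h | h | h | h | h | h | h | h
    · exact noP4T3 (compIos h hfe)
    · exact noH4T3 (compIos h hfe)
    · exact noH4T3 (compIos (iosConv.mp h) hfce)
    · exact noH5T3 (compIos h hfe)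
    · exact noH5T3 (compIos (iosConv.mp h) hfce)
    · exact noA4T3 (compIos h hfe)
    · exact noA4T3 (compIos (iosConv.mp h) hfce)
    · exact noB2T3 (compIos h hfe)
    · exact noB2T3 (compIos (iosConv.mp h) hfce)
  · intro hno
    simp only [not_or] at hno
    obtain ⟨n1, n2, n3, n4, n5, n6, n7, n8, n9⟩ := hno
    have c3 : ¬ IosHomEx H4rel (convRel E) := fun hx => n3 (iosConv.mpr hx)
    have c5 : ¬ IosHomEx H5rel (convRel E) := fun hx => n5 (iosConv.mpr hx)
    have c7 : ¬ IosHomEx A4rel (convRel E) := fun hx => n7 (iosConv.mpr hx)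
    have c9 : ¬ IosHomEx B2rel (convRel E) := fun hx => n9 (iosConv.mpr hx)
    exact master (mkP4 n1) (mkH4 n2)
      (fun x a b c ha hb hc => mkH4 c3 ha hb hc)
      (mkA4 n6)
      (fun x a b c ha hb hab hc => mkA4 c7 ha hb hab hc)
      (mkH5 n4)
      (fun v a b p q h1 h2 hab h3 h4 => mkH5 c5 h1 h2 hab h3 h4)
      (mkB2 n8)
      (fun c b d a e h1 h2 hbd h3 hac h4 hec => mkB2 c9 h1 h2 hbd h3 hac h4 hec)
end

section
/- A finite irreflexive oriented graph G has an ios-injective homomorphism to the transitive tournament T_3 if and only if G has no oriented 4-cycle as a subgraph and none of C_3, P_4, H_4, H_4^c, H_5, H_5^c, A_4, A_4^c, B_2 and B_2^c is a subgraph of G. -/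
section Fwd

lemma iosInj_iff {A B : Type} (R : A → A → Prop) (f : A → B) :
    IosInj R f ↔ ∀ x y z : A, f y = f z →
      ((R y x ∧ R z x) ∨ (R x y ∧ R x z)) → y = z := by
  constructor
  · rintro h x y z hf (⟨h1, h2⟩ | ⟨h1, h2⟩)
    · exact (h x).1 h1 h2 hf
    · exact (h x).2 h1 h2 hf
  · intro h x
    exact ⟨fun y h1 z h2 hf => h x y z hf (Or.inl ⟨h1, h2⟩),
           fun y h1 z h2 hf => h x y z hf (Or.inr ⟨h1, h2⟩)⟩

instance decH5 : DecidableRel H5rel := fun i j => by unfold H5rel; infer_instance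
instance decH4 : DecidableRel H4rel := fun i j => by unfold H4rel; infer_instance
instance decA4 : DecidableRel A4rel := fun i j => by unfold A4rel; infer_instance
instance decB2 : DecidableRel B2rel := fun i j => by unfold B2rel; infer_instance
instance decDC3 : DecidableRel (DCycRel 3) := fun i j => by unfold DCycRel; infer_instance
instance decDP4 : DecidableRel (DPathRel 4) := fun i j => by unfold DPathRel; infer_instance
instance decConv {A : Type} (R : A → A → Prop) [DecidableRel R] :
    DecidableRel (convRel R) := fun i j => by unfold convRel; infer_instance
instance decTT (n : ℕ) : DecidableRel (TTrel n) := fun i j => by unfold TTrel; infer_instance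

instance decIsHom {n m : ℕ} (R : Fin n → Fin n → Prop) [DecidableRel R]
    (S : Fin m → Fin m → Prop) [DecidableRel S] (f : Fin n → Fin m) :
    Decidable (IsHom R S f) := by unfold IsHom; infer_instance

instance decIosInj {n m : ℕ} (R : Fin n → Fin n → Prop) [DecidableRel R]
    (f : Fin n → Fin m) : Decidable (IosInj R f) :=
  decidable_of_iff _ (iosInj_iff R f).symm

set_option maxRecDepth 40000 in
lemma noH5 : ∀ f : Fin 5 → Fin 3, ¬ (IsHom H5rel (TTrel 3) f ∧ IosInj H5rel f) := by decide
set_option maxRecDepth 40000 in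
lemma noH5c : ∀ f : Fin 5 → Fin 3, ¬ (IsHom (convRel H5rel) (TTrel 3) f ∧ IosInj (convRel H5rel) f) := by decide
set_option maxRecDepth 40000 in
lemma noB2 : ∀ f : Fin 5 → Fin 3, ¬ (IsHom B2rel (TTrel 3) f ∧ IosInj B2rel f) := by decide
set_option maxRecDepth 40000 in
lemma noB2c : ∀ f : Fin 5 → Fin 3, ¬ (IsHom (convRel B2rel) (TTrel 3) f ∧ IosInj (convRel B2rel) f) := by decide
set_option maxRecDepth 40000 in
lemma noH4 : ∀ f : Fin 4 → Fin 3, ¬ (IsHom H4rel (TTrel 3) f ∧ IosInj H4rel f) := by decide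
set_option maxRecDepth 40000 in
lemma noH4c : ∀ f : Fin 4 → Fin 3, ¬ (IsHom (convRel H4rel) (TTrel 3) f ∧ IosInj (convRel H4rel) f) := by decide
set_option maxRecDepth 40000 in
lemma noA4 : ∀ f : Fin 4 → Fin 3, ¬ (IsHom A4rel (TTrel 3) f ∧ IosInj A4rel f) := by decide
set_option maxRecDepth 40000 in
lemma noA4c : ∀ f : Fin 4 → Fin 3, ¬ (IsHom (convRel A4rel) (TTrel 3) f ∧ IosInj (convRel A4rel) f) := by decide
set_option maxRecDepth 40000 in
lemma noC3 : ∀ f : Fin 3 → Fin 3, ¬ (IsHom (DCycRel 3) (TTrel 3) f ∧ IosInj (DCycRel 3) f) := by decide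
set_option maxRecDepth 40000 in
lemma noP4 : ∀ f : Fin 4 → Fin 3, ¬ (IsHom (DPathRel 4) (TTrel 3) f ∧ IosInj (DPathRel 4) f) := by decide

/-- squashed 4-cycle relation -/
def R4 (b : Fin 4 → Bool) : Fin 4 → Fin 4 → Prop := fun x y =>
  ∃ t : Fin 4, ((b t = true ∧ (x : ℕ) = (t : ℕ) ∧ (y : ℕ) = ((t : ℕ) + 1) % 4) ∨
    (b t = false ∧ (x : ℕ) = ((t : ℕ) + 1) % 4 ∧ (y : ℕ) = (t : ℕ)))

instance decR4 (b : Fin 4 → Bool) : DecidableRel (R4 b) := fun i j => by unfold R4; infer_instance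

lemma ocyc4_eq (σ : ℕ → Bool) : OCycRel 4 σ = R4 (fun i => σ (i : ℕ)) := by
  funext x y
  apply propext
  constructor
  · rintro ⟨t, ht, h⟩
    exact ⟨⟨t, ht⟩, h⟩
  · rintro ⟨t, h⟩
    exact ⟨(t : ℕ), t.isLt, h⟩

set_option maxRecDepth 100000 in
lemma noOC4' : ∀ b : Fin 4 → Bool, ∀ f : Fin 4 → Fin 3,
    ¬ (IsHom (R4 b) (TTrel 3) f ∧ IosInj (R4 b) f) := by decide

lemma noOC4 (σ : ℕ → Bool) : ∀ f : Fin 4 → Fin 3,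
    ¬ (IsHom (OCycRel 4 σ) (TTrel 3) f ∧ IosInj (OCycRel 4 σ) f) := by
  rw [ocyc4_eq]; exact noOC4' _

/-- composing a subgraph embedding with an ios-injective hom -/
lemma comp_ios {A B : Type} {R : A → A → Prop} {S : B → B → Prop}
    (h : Subg R S) {f : B → Fin 3} (hf : IsHom S (TTrel 3) f) (hi : IosInj S f) :
    ∃ g : A → Fin 3, IsHom R (TTrel 3) g ∧ IosInj R g := by
  obtain ⟨g, hginj, hghom⟩ := h
  refine ⟨fun a => f (g a), fun x y hxy => hf _ _ (hghom x y hxy), fun x => ?_⟩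
  constructor
  · intro y hy z hz hfz
    exact hginj ((hi (g x)).1 (hghom _ _ hy) (hghom _ _ hz) hfz)
  · intro y hy z hz hfz
    exact hginj ((hi (g x)).2 (hghom _ _ hy) (hghom _ _ hz) hfz)

end Fwd
section Emb
variable {V : Type} {E : V → V → Prop}

lemma inj5 {a b c d e : V} (h01 : a ≠ b) (h02 : a ≠ c) (h03 : a ≠ d) (h04 : a ≠ e)
    (h12 : b ≠ c) (h13 : b ≠ d) (h14 : b ≠ e) (h23 : c ≠ d) (h24 : c ≠ e) (h34 : d ≠ e) :
    Function.Injective ![a, b, c, d, e] := by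
  intro i j hij
  fin_cases i <;> fin_cases j <;> simp_all

lemma inj4 {a b c d : V} (h01 : a ≠ b) (h02 : a ≠ c) (h03 : a ≠ d)
    (h12 : b ≠ c) (h13 : b ≠ d) (h23 : c ≠ d) :
    Function.Injective ![a, b, c, d] := by
  intro i j hij
  fin_cases i <;> fin_cases j <;> simp_all

lemma inj3 {a b c : V} (h01 : a ≠ b) (h02 : a ≠ c) (h12 : b ≠ c) :
    Function.Injective ![a, b, c] := by
  intro i j hij
  fin_cases i <;> fin_cases j <;> simp_all

lemma subg_H4 {a b c d : V} (hinj : Function.Injective ![a, b, c, d])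
    (h1 : E a d) (h2 : E b d) (h3 : E c d) : Subg H4rel E := by
  refine ⟨![a, b, c, d], hinj, fun x y h => ?_⟩
  unfold H4rel at h
  fin_cases x <;> fin_cases y <;> simp_all

lemma subg_H4c {a b c d : V} (hinj : Function.Injective ![a, b, c, d])
    (h1 : E d a) (h2 : E d b) (h3 : E d c) : Subg (convRel H4rel) E := by
  refine ⟨![a, b, c, d], hinj, fun x y h => ?_⟩
  unfold convRel H4rel at h
  fin_cases x <;> fin_cases y <;> simp_all

lemma subg_A4 {a b c d : V} (hinj : Function.Injective ![a, b, c, d])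
    (h1 : E a c) (h2 : E b c) (h3 : E c d) : Subg A4rel E := by
  refine ⟨![a, b, c, d], hinj, fun x y h => ?_⟩
  unfold A4rel at h
  fin_cases x <;> fin_cases y <;> simp_all

lemma subg_A4c {a b c d : V} (hinj : Function.Injective ![a, b, c, d])
    (h1 : E c a) (h2 : E c b) (h3 : E d c) : Subg (convRel A4rel) E := by
  refine ⟨![a, b, c, d], hinj, fun x y h => ?_⟩
  unfold convRel A4rel at h
  fin_cases x <;> fin_cases y <;> simp_all

lemma subg_C3 {a b c : V} (hinj : Function.Injective ![a, b, c])
    (h1 : E a b) (h2 : E b c) (h3 : E c a) : Subg (DCycRel 3) E := by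
  refine ⟨![a, b, c], hinj, fun x y h => ?_⟩
  unfold DCycRel at h
  fin_cases x <;> fin_cases y <;> simp_all

lemma subg_P4 {a b c d : V} (hinj : Function.Injective ![a, b, c, d])
    (h1 : E a b) (h2 : E b c) (h3 : E c d) : Subg (DPathRel 4) E := by
  refine ⟨![a, b, c, d], hinj, fun x y h => ?_⟩
  unfold DPathRel at h
  fin_cases x <;> fin_cases y <;> simp_all

lemma subg_H5 {a b c d e : V} (hinj : Function.Injective ![a, b, c, d, e])
    (h1 : E a b) (h2 : E b c) (h3 : E a d) (h4 : E d e) : Subg H5rel E := by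
  refine ⟨![a, b, c, d, e], hinj, fun x y h => ?_⟩
  unfold H5rel at h
  fin_cases x <;> fin_cases y <;> simp_all

lemma subg_H5c {a b c d e : V} (hinj : Function.Injective ![a, b, c, d, e])
    (h1 : E b a) (h2 : E c b) (h3 : E d a) (h4 : E e d) : Subg (convRel H5rel) E := by
  refine ⟨![a, b, c, d, e], hinj, fun x y h => ?_⟩
  unfold convRel H5rel at h
  fin_cases x <;> fin_cases y <;> simp_all

lemma subg_B2 {a b c d e : V} (hinj : Function.Injective ![a, b, c, d, e])
    (h1 : E a b) (h2 : E c b) (h3 : E c d) (h4 : E e d) : Subg B2rel E := by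
  refine ⟨![a, b, c, d, e], hinj, fun x y h => ?_⟩
  unfold B2rel at h
  fin_cases x <;> fin_cases y <;> simp_all

lemma subg_B2c {a b c d e : V} (hinj : Function.Injective ![a, b, c, d, e])
    (h1 : E b a) (h2 : E b c) (h3 : E d c) (h4 : E d e) : Subg (convRel B2rel) E := by
  refine ⟨![a, b, c, d, e], hinj, fun x y h => ?_⟩
  unfold convRel B2rel at h
  fin_cases x <;> fin_cases y <;> simp_all

/-- oriented 4-cycle embedding: `σ t` tells the direction of edge `t`. -/
lemma subg_OC4 (σ : ℕ → Bool) (g : Fin 4 → V) (hinj : Function.Injective g)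
    (harc : ∀ t : Fin 4, (σ (t : ℕ) = true → E (g t) (g (t + 1))) ∧
      (σ (t : ℕ) = false → E (g (t + 1)) (g t))) :
    Subg (OCycRel 4 σ) E := by
  refine ⟨g, hinj, fun x y h => ?_⟩
  obtain ⟨t, ht, h⟩ := h
  set tf : Fin 4 := ⟨t, ht⟩ with htf
  have hval : ((tf + 1 : Fin 4) : ℕ) = (t + 1) % 4 := by
    simp [Fin.add_def, htf]
  rcases h with ⟨hσ, hx, hy⟩ | ⟨hσ, hx, hy⟩
  · have hx' : x = tf := Fin.ext hx
    have hy' : y = tf + 1 := Fin.ext (by rw [hy, hval])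
    rw [hx', hy']
    exact (harc tf).1 hσ
  · have hx' : x = tf + 1 := Fin.ext (by rw [hx, hval])
    have hy' : y = tf := Fin.ext hy
    rw [hx', hy']
    exact (harc tf).2 hσ

end Emb
structure GoodCtx {V : Type} (E : V → V → Prop) (lt : V → V → Prop) : Prop where
  ltasym : ∀ u v, lt u v → ¬ lt v u
  lttot : ∀ u v, u ≠ v → lt u v ∨ lt v u
  irr : ∀ x, ¬ E x x
  asym : ∀ x y, E x y → ¬ E y x
  h4 : ∀ a b c x, E a x → E b x → E c x → a = b ∨ a = c ∨ b = c
  h4' : ∀ a b c x, E x a → E x b → E x c → a = b ∨ a = c ∨ b = c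
  a4 : ∀ a b x y, a ≠ b → E a x → E b x → ¬ E x y
  a4' : ∀ a b x y, a ≠ b → E x a → E x b → ¬ E y x
  p4 : ∀ a b c d, E a b → E b c → ¬ E c d
  h5 : ∀ x y y' z z', y ≠ y' → E x y → E x y' → E y z → ¬ E y' z'
  h5' : ∀ x y y' z z', y ≠ y' → E y x → E y' x → E z y → ¬ E z' y'
  b2 : ∀ x y y' w w', y ≠ y' → E x y → E x y' → w ≠ x → E w y → w' ≠ x → ¬ E w' y'
  b2' : ∀ x y y' w w', y ≠ y' → E y x → E y' x → w ≠ x → E y w → w' ≠ x → ¬ E y' w'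

lemma mkGood {V : Type} (E : V → V → Prop) (lt : V → V → Prop)
    (ltasym : ∀ u v, lt u v → ¬ lt v u) (lttot : ∀ u v, u ≠ v → lt u v ∨ lt v u)
    (hor : IsOriented E) (hirr : NoLoops E)
    (hc4 : ¬ ∃ σ : ℕ → Bool, Subg (OCycRel 4 σ) E)
    (nC3 : ¬ Subg (DCycRel 3) E) (nP4 : ¬ Subg (DPathRel 4) E)
    (nH4 : ¬ Subg H4rel E) (nH4c : ¬ Subg (convRel H4rel) E)
    (nH5 : ¬ Subg H5rel E) (nH5c : ¬ Subg (convRel H5rel) E)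
    (nA4 : ¬ Subg A4rel E) (nA4c : ¬ Subg (convRel A4rel) E)
    (nB2 : ¬ Subg B2rel E) (nB2c : ¬ Subg (convRel B2rel) E) :
    GoodCtx E lt := by
  have irr : ∀ x, ¬ E x x := hirr
  have asym : ∀ x y, E x y → ¬ E y x := by
    intro x y hxy hyx
    rcases eq_or_ne x y with rfl | hne
    · exact irr x hxy
    · exact hor x y hne ⟨hxy, hyx⟩
  have nea : ∀ {x y : V}, E x y → x ≠ y := fun {x y} h => by
    rintro rfl; exact irr x h
  have p4 : ∀ a b c d, E a b → E b c → ¬ E c d := by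
    intro a b c d h1 h2 h3
    have hac : a ≠ c := fun h => asym _ _ h2 (h ▸ h1)
    have hbd : b ≠ d := fun h => asym _ _ h3 (h ▸ h2)
    rcases eq_or_ne a d with rfl | had
    · exact nC3 (subg_C3 (inj3 (nea h1) hac (nea h2)) h1 h2 h3)
    · exact nP4 (subg_P4 (inj4 (nea h1) hac had (nea h2) hbd (nea h3)) h1 h2 h3)
  have h4 : ∀ a b c x, E a x → E b x → E c x → a = b ∨ a = c ∨ b = c := by
    intro a b c x h1 h2 h3
    by_contra h
    push_neg at h
    obtain ⟨hab, hac, hbc⟩ := h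
    exact nH4 (subg_H4 (inj4 hab hac (nea h1) hbc (nea h2) (nea h3)) h1 h2 h3)
  have h4' : ∀ a b c x, E x a → E x b → E x c → a = b ∨ a = c ∨ b = c := by
    intro a b c x h1 h2 h3
    by_contra h
    push_neg at h
    obtain ⟨hab, hac, hbc⟩ := h
    exact nH4c (subg_H4c (inj4 hab hac (nea h1).symm hbc (nea h2).symm (nea h3).symm) h1 h2 h3)
  have a4 : ∀ a b x y, a ≠ b → E a x → E b x → ¬ E x y := by
    intro a b x y hab h1 h2 h3
    have hay : a ≠ y := fun h => asym _ _ h3 (h ▸ h1)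
    have hby : b ≠ y := fun h => asym _ _ h3 (h ▸ h2)
    exact nA4 (subg_A4 (inj4 hab (nea h1) hay (nea h2) hby (nea h3)) h1 h2 h3)
  have a4' : ∀ a b x y, a ≠ b → E x a → E x b → ¬ E y x := by
    intro a b x y hab h1 h2 h3
    have hay : a ≠ y := fun h => asym _ _ h1 (h ▸ h3)
    have hby : b ≠ y := fun h => asym _ _ h2 (h ▸ h3)
    exact nA4c (subg_A4c (inj4 hab (nea h1).symm hay (nea h2).symm hby (nea h3).symm) h1 h2 h3)
  have h5 : ∀ x y y' z z', y ≠ y' → E x y → E x y' → E y z → ¬ E y' z' := by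
    intro x y y' z z' hne h1 h2 h3 h4a
    rcases eq_or_ne z x with rfl | hzx
    · exact asym _ _ h1 h3
    rcases eq_or_ne z' x with rfl | hz'x
    · exact asym _ _ h2 h4a
    rcases eq_or_ne z y' with rfl | hzy'
    · exact p4 x y z z' h1 h3 h4a
    rcases eq_or_ne z' y with rfl | hz'y
    · exact p4 x y' z' z h2 h4a h3
    rcases eq_or_ne z z' with rfl | hzz'
    · refine hc4 ⟨fun t => decide (t < 2), subg_OC4 _ ![x, y, z, y']
        (inj4 (nea h1) hzx.symm (nea h2) (nea h3) hne (nea h4a).symm) ?_⟩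
      intro t
      fin_cases t
      · exact ⟨fun _ => h1, fun h => absurd h (by decide)⟩
      · exact ⟨fun _ => h3, fun h => absurd h (by decide)⟩
      · exact ⟨fun h => absurd h (by decide), fun _ => h4a⟩
      · exact ⟨fun h => absurd h (by decide), fun _ => h2⟩
    · exact nH5 (subg_H5 (inj5 (nea h1) hzx.symm (nea h2) hz'x.symm
        (nea h3) hne hz'y.symm hzy' hzz' (nea h4a)) h1 h3 h2 h4a)
  have h5' : ∀ x y y' z z', y ≠ y' → E y x → E y' x → E z y → ¬ E z' y' := by
    intro x y y' z z' hne h1 h2 h3 h4a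
    rcases eq_or_ne z x with rfl | hzx
    · exact asym _ _ h1 h3
    rcases eq_or_ne z' x with rfl | hz'x
    · exact asym _ _ h2 h4a
    rcases eq_or_ne z y' with rfl | hzy'
    · exact p4 z' z y x h4a h3 h1
    rcases eq_or_ne z' y with rfl | hz'y
    · exact p4 z z' y' x h3 h4a h2
    rcases eq_or_ne z z' with rfl | hzz'
    · refine hc4 ⟨fun t => decide (2 ≤ t), subg_OC4 _ ![x, y, z, y']
        (inj4 (nea h1).symm hzx.symm (nea h2).symm (nea h3).symm hne (nea h4a)) ?_⟩
      intro t
      fin_cases t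
      · exact ⟨fun h => absurd h (by decide), fun _ => h1⟩
      · exact ⟨fun h => absurd h (by decide), fun _ => h3⟩
      · exact ⟨fun _ => h4a, fun h => absurd h (by decide)⟩
      · exact ⟨fun _ => h2, fun h => absurd h (by decide)⟩
    · exact nH5c (subg_H5c (inj5 (nea h1).symm hzx.symm (nea h2).symm hz'x.symm
        (nea h3).symm hne hz'y.symm hzy' hzz' (nea h4a).symm) h1 h3 h2 h4a)
  have b2 : ∀ x y y' w w', y ≠ y' → E x y → E x y' → w ≠ x → E w y → w' ≠ x → ¬ E w' y' := by
    intro x y y' w w' hne h1 h2 hwx h3 hw'x h4a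
    rcases eq_or_ne w y' with rfl | hwy'
    · exact a4 x w' w y hw'x.symm h2 h4a h3
    rcases eq_or_ne w' y with rfl | hw'y
    · exact a4 x w w' y' hwx.symm h1 h3 h4a
    rcases eq_or_ne w w' with rfl | hww'
    · refine hc4 ⟨fun t => decide (t % 2 = 0), subg_OC4 _ ![x, y, w, y']
        (inj4 (nea h1) hwx.symm (nea h2) (nea h3).symm hne hwy') ?_⟩
      intro t
      fin_cases t
      · exact ⟨fun _ => h1, fun h => absurd h (by decide)⟩
      · exact ⟨fun h => absurd h (by decide), fun _ => h3⟩
      · exact ⟨fun _ => h4a, fun h => absurd h (by decide)⟩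
      · exact ⟨fun h => absurd h (by decide), fun _ => h2⟩
    · exact nB2 (subg_B2 (inj5 (nea h3) hwx hwy' hww' (nea h1).symm hne
        hw'y.symm (nea h2) hw'x.symm (nea h4a).symm) h3 h1 h2 h4a)
  have b2' : ∀ x y y' w w', y ≠ y' → E y x → E y' x → w ≠ x → E y w → w' ≠ x → ¬ E y' w' := by
    intro x y y' w w' hne h1 h2 hwx h3 hw'x h4a
    rcases eq_or_ne w y' with rfl | hwy'
    · exact a4' x w' w y hw'x.symm h2 h4a h3
    rcases eq_or_ne w' y with rfl | hw'y
    · exact a4' x w w' y' hwx.symm h1 h3 h4a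
    rcases eq_or_ne w w' with rfl | hww'
    · refine hc4 ⟨fun t => decide (t % 2 = 1), subg_OC4 _ ![x, y, w, y']
        (inj4 (nea h1).symm hwx.symm (nea h2).symm (nea h3) hne hwy') ?_⟩
      intro t
      fin_cases t
      · exact ⟨fun h => absurd h (by decide), fun _ => h1⟩
      · exact ⟨fun _ => h3, fun h => absurd h (by decide)⟩
      · exact ⟨fun h => absurd h (by decide), fun _ => h4a⟩
      · exact ⟨fun _ => h2, fun h => absurd h (by decide)⟩
    · exact nB2c (subg_B2c (inj5 (nea h3).symm hwx hwy' hww' (nea h1) hne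
        hw'y.symm (nea h2).symm hw'x.symm (nea h4a)) h3 h1 h2 h4a)
  exact ⟨ltasym, lttot, irr, asym, h4, h4', a4, a4', p4, h5, h5', b2, b2'⟩
section Construction
open scoped Classical
set_option linter.unusedSectionVars false
variable {V : Type}

/-- canonical in-neighbour -/
noncomputable def epsIn (E : V → V → Prop) (x : V) : V :=
  @Classical.epsilon V ⟨x⟩ (fun a => E a x)
/-- canonical out-neighbour -/
noncomputable def epsOut (E : V → V → Prop) (x : V) : V :=
  @Classical.epsilon V ⟨x⟩ (fun a => E x a)
/-- canonical second out-neighbour of the canonical in-neighbour -/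
noncomputable def epsZ (E : V → V → Prop) (x : V) : V :=
  @Classical.epsilon V ⟨x⟩ (fun a => E (epsIn E x) a ∧ a ≠ x)
/-- canonical second in-neighbour of the canonical out-neighbour -/
noncomputable def epsW (E : V → V → Prop) (x : V) : V :=
  @Classical.epsilon V ⟨x⟩ (fun a => E a (epsOut E x) ∧ a ≠ x)

lemma eps_eq {h : Nonempty V} {p : V → Prop} {u : V} (hu : p u)
    (huniq : ∀ a, p a → a = u) : @Classical.epsilon V h p = u :=
  huniq _ (Classical.epsilon_spec (⟨u, hu⟩ : ∃ a, p a))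

open scoped Classical in
noncomputable def fcol (E lt : V → V → Prop) : V → Fin 3 := fun x =>
  if ∃ a b, a ≠ b ∧ E a x ∧ E b x then 2
  else if ∃ a b, a ≠ b ∧ E x a ∧ E x b then 0
  else if (∃ a, E a x) ∧ (∃ a, E x a) then 1
  else if ∃ a, E a x then
    if ∃ a, E a (epsIn E x) then 2
    else if ∃ a, E (epsIn E x) a ∧ a ≠ x then
      if ∃ a b, a ≠ b ∧ E a (epsZ E x) ∧ E b (epsZ E x) then 1
      else if ∃ a, E (epsZ E x) a then 2
      else if lt x (epsZ E x) then 1 else 2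
    else 1
  else if ∃ a, E x a then
    if ∃ a, E (epsOut E x) a then 0
    else if ∃ a, E a (epsOut E x) ∧ a ≠ x then
      if ∃ a b, a ≠ b ∧ E (epsW E x) a ∧ E (epsW E x) b then 1
      else if ∃ a, E a (epsW E x) then 0
      else if lt x (epsW E x) then 0 else 1
    else 0
  else 1

variable {E lt : V → V → Prop} (G : GoodCtx E lt)

/-- `In2` vertices get colour 2 -/
lemma fcol_in2 {x : V} (h : ∃ a b, a ≠ b ∧ E a x ∧ E b x) : fcol E lt x = 2 := by
  unfold fcol; rw [if_pos h]

include G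

lemma not_in2_of_out {x v : V} (hv : E x v) : ¬ ∃ a b, a ≠ b ∧ E a x ∧ E b x := by
  rintro ⟨a, b, hab, ha, hb⟩; exact G.a4 a b x v hab ha hb hv

lemma not_out2_of_in {x u : V} (hu : E u x) : ¬ ∃ a b, a ≠ b ∧ E x a ∧ E x b := by
  rintro ⟨a, b, hab, ha, hb⟩; exact G.a4' a b x u hab ha hb hu

/-- `Out2` vertices get colour 0 -/
lemma fcol_out2 {x : V} (h : ∃ a b, a ≠ b ∧ E x a ∧ E x b) : fcol E lt x = 0 := by
  obtain ⟨a, b, hab, ha, hb⟩ := h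
  unfold fcol
  rw [if_neg (not_in2_of_out G ha), if_pos ⟨a, b, hab, ha, hb⟩]

/-- through vertices get colour 1 -/
lemma fcol_thr {x u v : V} (hu : E u x) (hv : E x v) : fcol E lt x = 1 := by
  unfold fcol
  rw [if_neg (not_in2_of_out G hv), if_neg (not_out2_of_in G hu),
    if_pos ⟨⟨u, hu⟩, ⟨v, hv⟩⟩]

section Sink
variable {x u : V} (hu : E u x) (hno2 : ¬ ∃ a b, a ≠ b ∧ E a x ∧ E b x)
  (hsk : ∀ v, ¬ E x v)

include hu hno2 hsk

lemma sink_epsIn : epsIn E x = u := by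
  refine eps_eq hu (fun a ha => ?_)
  by_contra hne
  exact hno2 ⟨a, u, hne, ha, hu⟩

lemma fcol_sink_thr {w : V} (hw : E w u) : fcol E lt x = 2 := by
  unfold fcol
  rw [if_neg hno2, if_neg (not_out2_of_in G hu),
    if_neg (fun h => hsk _ h.2.choose_spec), if_pos ⟨u, hu⟩,
    sink_epsIn G hu hno2 hsk, if_pos ⟨w, hw⟩]

lemma sink_noThr {z : V} (hz : E u z) (hzx : z ≠ x) : ¬ ∃ a, E a u := by
  rintro ⟨a, ha⟩
  exact G.a4' x z u a (fun h => hzx h.symm) hu hz ha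

lemma sink_epsZ {z : V} (hz : E u z) (hzx : z ≠ x) : epsZ E x = z := by
  unfold epsZ
  rw [sink_epsIn G hu hno2 hsk]
  refine eps_eq ⟨hz, hzx⟩ (fun a ⟨ha, hax⟩ => ?_)
  rcases G.h4' a z x u ha hz hu with h | h | h
  · exact h
  · exact absurd h hax
  · exact absurd h hzx

lemma fcol_sink_z_in2 {z : V} (hz : E u z) (hzx : z ≠ x)
    (hzin2 : ∃ a b, a ≠ b ∧ E a z ∧ E b z) : fcol E lt x = 1 := by
  unfold fcol
  rw [if_neg hno2, if_neg (not_out2_of_in G hu),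
    if_neg (fun h => hsk _ h.2.choose_spec), if_pos ⟨u, hu⟩,
    sink_epsIn G hu hno2 hsk, if_neg (sink_noThr G hu hno2 hsk hz hzx), if_pos ⟨z, hz, hzx⟩,
    sink_epsZ G hu hno2 hsk hz hzx, if_pos hzin2]

lemma fcol_sink_z_thr {z w : V} (hz : E u z) (hzx : z ≠ x) (hzw : E z w) :
    fcol E lt x = 2 := by
  unfold fcol
  rw [if_neg hno2, if_neg (not_out2_of_in G hu),
    if_neg (fun h => hsk _ h.2.choose_spec), if_pos ⟨u, hu⟩,
    sink_epsIn G hu hno2 hsk, if_neg (sink_noThr G hu hno2 hsk hz hzx), if_pos ⟨z, hz, hzx⟩,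
    sink_epsZ G hu hno2 hsk hz hzx, if_neg (not_in2_of_out G hzw), if_pos ⟨w, hzw⟩]

lemma fcol_sink_z_tie {z : V} (hz : E u z) (hzx : z ≠ x)
    (hzno2 : ¬ ∃ a b, a ≠ b ∧ E a z ∧ E b z) (hzsk : ∀ w, ¬ E z w) :
    fcol E lt x = if lt x z then 1 else 2 := by
  unfold fcol
  rw [if_neg hno2, if_neg (not_out2_of_in G hu),
    if_neg (fun h => hsk _ h.2.choose_spec), if_pos ⟨u, hu⟩,
    sink_epsIn G hu hno2 hsk, if_neg (sink_noThr G hu hno2 hsk hz hzx), if_pos ⟨z, hz, hzx⟩,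
    sink_epsZ G hu hno2 hsk hz hzx, if_neg hzno2, if_neg (fun h => hzsk _ h.choose_spec)]

lemma fcol_sink_lone (hlone : ∀ z, E u z → z = x) (huin : ∀ w, ¬ E w u) :
    fcol E lt x = 1 := by
  unfold fcol
  rw [if_neg hno2, if_neg (not_out2_of_in G hu),
    if_neg (fun h => hsk _ h.2.choose_spec), if_pos ⟨u, hu⟩,
    sink_epsIn G hu hno2 hsk, if_neg (fun h => huin _ h.choose_spec),
    if_neg (fun h => h.choose_spec.2 (hlone _ h.choose_spec.1))]

lemma fcol_sink_ne0 : fcol E lt x ≠ 0 := by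
  unfold fcol
  rw [if_neg hno2, if_neg (not_out2_of_in G hu),
    if_neg (fun h => hsk _ h.2.choose_spec), if_pos ⟨u, hu⟩]
  split_ifs <;> decide

end Sink

section Src
variable {x v : V} (hv : E x v) (hno2 : ¬ ∃ a b, a ≠ b ∧ E x a ∧ E x b)
  (hsr : ∀ u, ¬ E u x)

include hv hno2 hsr

lemma src_epsOut : epsOut E x = v := by
  refine eps_eq hv (fun a ha => ?_)
  by_contra hne
  exact hno2 ⟨a, v, hne, ha, hv⟩

lemma fcol_src_thr {w : V} (hw : E v w) : fcol E lt x = 0 := by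
  unfold fcol
  rw [if_neg (not_in2_of_out G hv), if_neg hno2,
    if_neg (fun h => hsr _ h.1.choose_spec), if_neg (fun h => hsr _ h.choose_spec),
    if_pos ⟨v, hv⟩, src_epsOut G hv hno2 hsr, if_pos ⟨w, hw⟩]

lemma src_noThr {w : V} (hw : E w v) (hwx : w ≠ x) : ¬ ∃ a, E v a := by
  rintro ⟨a, ha⟩
  exact G.a4 x w v a (fun h => hwx h.symm) hv hw ha

lemma src_epsW {w : V} (hw : E w v) (hwx : w ≠ x) : epsW E x = w := by
  unfold epsW
  rw [src_epsOut G hv hno2 hsr]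
  refine eps_eq ⟨hw, hwx⟩ (fun a ⟨ha, hax⟩ => ?_)
  rcases G.h4 a w x v ha hw hv with h | h | h
  · exact h
  · exact absurd h hax
  · exact absurd h hwx

lemma fcol_src_w_out2 {w : V} (hw : E w v) (hwx : w ≠ x)
    (hwo2 : ∃ a b, a ≠ b ∧ E w a ∧ E w b) : fcol E lt x = 1 := by
  unfold fcol
  rw [if_neg (not_in2_of_out G hv), if_neg hno2,
    if_neg (fun h => hsr _ h.1.choose_spec), if_neg (fun h => hsr _ h.choose_spec),
    if_pos ⟨v, hv⟩, src_epsOut G hv hno2 hsr, if_neg (src_noThr G hv hno2 hsr hw hwx),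
    if_pos ⟨w, hw, hwx⟩, src_epsW G hv hno2 hsr hw hwx, if_pos hwo2]

lemma fcol_src_w_thr {w z : V} (hw : E w v) (hwx : w ≠ x) (hzw : E z w) :
    fcol E lt x = 0 := by
  unfold fcol
  rw [if_neg (not_in2_of_out G hv), if_neg hno2,
    if_neg (fun h => hsr _ h.1.choose_spec), if_neg (fun h => hsr _ h.choose_spec),
    if_pos ⟨v, hv⟩, src_epsOut G hv hno2 hsr, if_neg (src_noThr G hv hno2 hsr hw hwx),
    if_pos ⟨w, hw, hwx⟩, src_epsW G hv hno2 hsr hw hwx,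
    if_neg (not_out2_of_in G hzw), if_pos ⟨z, hzw⟩]

lemma fcol_src_w_tie {w : V} (hw : E w v) (hwx : w ≠ x)
    (hwno2 : ¬ ∃ a b, a ≠ b ∧ E w a ∧ E w b) (hwsr : ∀ z, ¬ E z w) :
    fcol E lt x = if lt x w then 0 else 1 := by
  unfold fcol
  rw [if_neg (not_in2_of_out G hv), if_neg hno2,
    if_neg (fun h => hsr _ h.1.choose_spec), if_neg (fun h => hsr _ h.choose_spec),
    if_pos ⟨v, hv⟩, src_epsOut G hv hno2 hsr, if_neg (src_noThr G hv hno2 hsr hw hwx),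
    if_pos ⟨w, hw, hwx⟩, src_epsW G hv hno2 hsr hw hwx,
    if_neg hwno2, if_neg (fun h => hwsr _ h.choose_spec)]

lemma fcol_src_lone (hlone : ∀ w, E w v → w = x) (hvsk : ∀ w, ¬ E v w) :
    fcol E lt x = 0 := by
  unfold fcol
  rw [if_neg (not_in2_of_out G hv), if_neg hno2,
    if_neg (fun h => hsr _ h.1.choose_spec), if_neg (fun h => hsr _ h.choose_spec),
    if_pos ⟨v, hv⟩, src_epsOut G hv hno2 hsr, if_neg (fun h => hvsk _ h.choose_spec),
    if_neg (fun h => h.choose_spec.2 (hlone _ h.choose_spec.1))]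

lemma fcol_src_ne2 : fcol E lt x ≠ 2 := by
  unfold fcol
  rw [if_neg (not_in2_of_out G hv), if_neg hno2,
    if_neg (fun h => hsr _ h.1.choose_spec), if_neg (fun h => hsr _ h.choose_spec),
    if_pos ⟨v, hv⟩]
  split_ifs <;> decide

end Src
end Construction
instance decTT' {n : ℕ} (i j : Fin n) : Decidable (TTrel n i j) := decTT n i j

lemma tt0 : ∀ j : Fin 3, j ≠ 0 → TTrel 3 0 j := by decide
lemma tt2 : ∀ i : Fin 3, i ≠ 2 → TTrel 3 i 2 := by decide
lemma tt12 : TTrel 3 1 2 := by decide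
lemma tt01 : TTrel 3 0 1 := by decide

section Main
open scoped Classical
variable {V : Type} {E lt : V → V → Prop} (G : GoodCtx E lt)
include G

theorem fcol_hom : IsHom E (TTrel 3) (fcol E lt) := by
  have t0 := tt0
  have t2 := tt2
  have t12 := tt12
  have t01 := tt01
  intro a b hab
  by_cases hao2 : ∃ p q, p ≠ q ∧ E a p ∧ E a q
  · rw [fcol_out2 G hao2]
    refine t0 _ ?_
    by_cases hbi2 : ∃ p q, p ≠ q ∧ E p b ∧ E q b
    · rw [fcol_in2 hbi2]; decide
    · by_cases hbth : ∃ z, E b z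
      · obtain ⟨z, hz⟩ := hbth
        rw [fcol_thr G hab hz]; decide
      · push_neg at hbth
        exact fcol_sink_ne0 G hab hbi2 hbth
  · by_cases hath : ∃ w, E w a
    · obtain ⟨w, hw⟩ := hath
      rw [fcol_thr G hw hab]
      have hbsk : ∀ z, ¬ E b z := fun z hz => G.p4 w a b z hw hab hz
      by_cases hbi2 : ∃ p q, p ≠ q ∧ E p b ∧ E q b
      · rw [fcol_in2 hbi2]; exact t12
      · rw [fcol_sink_thr G hab hbi2 hbsk hw]; exact t12
    · push_neg at hath
      by_cases hbth : ∃ z, E b z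
      · obtain ⟨z, hz⟩ := hbth
        rw [fcol_src_thr G hab hao2 hath hz, fcol_thr G hab hz]; exact t01
      · push_neg at hbth
        by_cases hbi2 : ∃ w, E w b ∧ w ≠ a
        · obtain ⟨w, hw, hwa⟩ := hbi2
          rw [fcol_in2 ⟨w, a, hwa, hw, hab⟩]
          exact t2 _ (fcol_src_ne2 G hab hao2 hath)
        · push_neg at hbi2
          have hbno2 : ¬ ∃ p q, p ≠ q ∧ E p b ∧ E q b := by
            rintro ⟨p, q, hpq, hp, hq⟩
            exact hpq ((hbi2 p hp).trans (hbi2 q hq).symm)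
          have hlone : ∀ z, E a z → z = b := by
            intro z hz
            by_contra hzb
            exact hao2 ⟨z, b, hzb, hz, hab⟩
          rw [fcol_src_lone G hab hao2 hath hbi2 hbth,
            fcol_sink_lone G hab hbno2 hbth hlone hath]
          exact t01

theorem fcol_ios : IosInj E (fcol E lt) := by
  intro x
  constructor
  · -- in-neighbourhood
    intro u hu0 u' hu0' heq
    by_contra hne
    have hu : E u x := hu0
    have hu' : E u' x := hu0'
    have hval : ∀ p q : V, p ≠ q → E p x → E q x →
        ((∃ w, E w p) ∧ fcol E lt p = 1) ∨
        ((∃ z, E p z ∧ z ≠ x) ∧ fcol E lt p = 0) ∨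
        ((∀ w, ¬ E w p) ∧ (∀ z, E p z → z = x) ∧
          fcol E lt p = (if ∃ c d, c ≠ d ∧ E q c ∧ E q d then 1
            else if ∃ c, E c q then 0 else if lt p q then 0 else 1)) := by
      intro p q hpq hp hq
      by_cases hth : ∃ w, E w p
      · exact Or.inl ⟨hth, fcol_thr G hth.choose_spec hp⟩
      · push_neg at hth
        by_cases ho2 : ∃ z, E p z ∧ z ≠ x
        · obtain ⟨z, hz, hzx⟩ := ho2
          exact Or.inr (Or.inl ⟨⟨z, hz, hzx⟩, fcol_out2 G ⟨z, x, hzx, hz, hp⟩⟩)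
        · push_neg at ho2
          refine Or.inr (Or.inr ⟨hth, ho2, ?_⟩)
          have hpno2 : ¬ ∃ c d, c ≠ d ∧ E p c ∧ E p d := by
            rintro ⟨c, d, hcd, hc, hd⟩
            exact hcd ((ho2 c hc).trans (ho2 d hd).symm)
          by_cases hq2 : ∃ c d, c ≠ d ∧ E q c ∧ E q d
          · rw [if_pos hq2]
            exact fcol_src_w_out2 G hp hpno2 hth hq hpq.symm hq2
          · rw [if_neg hq2]
            by_cases hqth : ∃ c, E c q
            · rw [if_pos hqth]
              exact fcol_src_w_thr G hp hpno2 hth hq hpq.symm hqth.choose_spec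
            · rw [if_neg hqth]
              push_neg at hqth
              exact fcol_src_w_tie G hp hpno2 hth hq hpq.symm hq2 hqth
    rcases hval u u' hne hu hu' with ⟨⟨w, hw⟩, e1⟩ | ⟨⟨z, hz, hzx⟩, e1⟩ | ⟨ha1, ha2, e1⟩ <;>
      rcases hval u' u (Ne.symm hne) hu' hu with ⟨⟨w', hw'⟩, e2⟩ | ⟨⟨z', hz', hz'x⟩, e2⟩ |
        ⟨hb1, hb2, e2⟩
    · exact G.h5' x u u' w w' hne hu hu' hw hw'
    · rw [e1, e2] at heq; exact absurd heq (by decide)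
    · rw [if_neg (not_out2_of_in G hw), if_pos ⟨w, hw⟩] at e2
      rw [e1, e2] at heq; exact absurd heq (by decide)
    · rw [e1, e2] at heq; exact absurd heq (by decide)
    · exact G.b2' x u u' z z' hne hu hu' hzx hz hz'x hz'
    · rw [if_pos ⟨z, x, hzx, hz, hu⟩] at e2
      rw [e1, e2] at heq; exact absurd heq (by decide)
    · rw [if_neg (not_out2_of_in G hw'), if_pos ⟨w', hw'⟩] at e1
      rw [e1, e2] at heq; exact absurd heq (by decide)
    · rw [if_pos ⟨z', x, hz'x, hz', hu'⟩] at e1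
      rw [e1, e2] at heq; exact absurd heq (by decide)
    · have hu'no2 : ¬ ∃ c d, c ≠ d ∧ E u' c ∧ E u' d := by
        rintro ⟨c, d, hcd, hc, hd⟩
        exact hcd ((hb2 c hc).trans (hb2 d hd).symm)
      have huno2 : ¬ ∃ c d, c ≠ d ∧ E u c ∧ E u d := by
        rintro ⟨c, d, hcd, hc, hd⟩
        exact hcd ((ha2 c hc).trans (ha2 d hd).symm)
      rw [if_neg hu'no2, if_neg (fun h => hb1 _ h.choose_spec)] at e1
      rw [if_neg huno2, if_neg (fun h => ha1 _ h.choose_spec)] at e2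
      rcases G.lttot u u' hne with hl | hl
      · rw [if_pos hl] at e1
        rw [if_neg (G.ltasym _ _ hl)] at e2
        rw [e1, e2] at heq; exact absurd heq (by decide)
      · rw [if_neg (G.ltasym _ _ hl)] at e1
        rw [if_pos hl] at e2
        rw [e1, e2] at heq; exact absurd heq (by decide)
  · -- out-neighbourhood
    intro u hu0 u' hu0' heq
    by_contra hne
    have hu : E x u := hu0
    have hu' : E x u' := hu0'
    have hval : ∀ p q : V, p ≠ q → E x p → E x q →
        ((∃ w, E p w) ∧ fcol E lt p = 1) ∨
        ((∃ z, E z p ∧ z ≠ x) ∧ fcol E lt p = 2) ∨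
        ((∀ w, ¬ E p w) ∧ (∀ z, E z p → z = x) ∧
          fcol E lt p = (if ∃ c d, c ≠ d ∧ E c q ∧ E d q then 1
            else if ∃ c, E q c then 2 else if lt p q then 1 else 2)) := by
      intro p q hpq hp hq
      by_cases hth : ∃ w, E p w
      · exact Or.inl ⟨hth, fcol_thr G hp hth.choose_spec⟩
      · push_neg at hth
        by_cases hi2 : ∃ z, E z p ∧ z ≠ x
        · obtain ⟨z, hz, hzx⟩ := hi2
          exact Or.inr (Or.inl ⟨⟨z, hz, hzx⟩, fcol_in2 ⟨z, x, hzx, hz, hp⟩⟩)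
        · push_neg at hi2
          refine Or.inr (Or.inr ⟨hth, hi2, ?_⟩)
          have hpno2 : ¬ ∃ c d, c ≠ d ∧ E c p ∧ E d p := by
            rintro ⟨c, d, hcd, hc, hd⟩
            exact hcd ((hi2 c hc).trans (hi2 d hd).symm)
          by_cases hq2 : ∃ c d, c ≠ d ∧ E c q ∧ E d q
          · rw [if_pos hq2]
            exact fcol_sink_z_in2 G hp hpno2 hth hq hpq.symm hq2
          · rw [if_neg hq2]
            by_cases hqth : ∃ c, E q c
            · rw [if_pos hqth]
              exact fcol_sink_z_thr G hp hpno2 hth hq hpq.symm hqth.choose_spec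
            · rw [if_neg hqth]
              push_neg at hqth
              exact fcol_sink_z_tie G hp hpno2 hth hq hpq.symm hq2 hqth
    rcases hval u u' hne hu hu' with ⟨⟨w, hw⟩, e1⟩ | ⟨⟨z, hz, hzx⟩, e1⟩ | ⟨ha1, ha2, e1⟩ <;>
      rcases hval u' u (Ne.symm hne) hu' hu with ⟨⟨w', hw'⟩, e2⟩ | ⟨⟨z', hz', hz'x⟩, e2⟩ |
        ⟨hb1, hb2, e2⟩
    · exact G.h5 x u u' w w' hne hu hu' hw hw'
    · rw [e1, e2] at heq; exact absurd heq (by decide)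
    · rw [if_neg (not_in2_of_out G hw), if_pos ⟨w, hw⟩] at e2
      rw [e1, e2] at heq; exact absurd heq (by decide)
    · rw [e1, e2] at heq; exact absurd heq (by decide)
    · exact G.b2 x u u' z z' hne hu hu' hzx hz hz'x hz'
    · rw [if_pos ⟨z, x, hzx, hz, hu⟩] at e2
      rw [e1, e2] at heq; exact absurd heq (by decide)
    · rw [if_neg (not_in2_of_out G hw'), if_pos ⟨w', hw'⟩] at e1
      rw [e1, e2] at heq; exact absurd heq (by decide)
    · rw [if_pos ⟨z', x, hz'x, hz', hu'⟩] at e1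
      rw [e1, e2] at heq; exact absurd heq (by decide)
    · have hu'no2 : ¬ ∃ c d, c ≠ d ∧ E c u' ∧ E d u' := by
        rintro ⟨c, d, hcd, hc, hd⟩
        exact hcd ((hb2 c hc).trans (hb2 d hd).symm)
      have huno2 : ¬ ∃ c d, c ≠ d ∧ E c u ∧ E d u := by
        rintro ⟨c, d, hcd, hc, hd⟩
        exact hcd ((ha2 c hc).trans (ha2 d hd).symm)
      rw [if_neg hu'no2, if_neg (fun h => hb1 _ h.choose_spec)] at e1
      rw [if_neg huno2, if_neg (fun h => ha1 _ h.choose_spec)] at e2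
      rcases G.lttot u u' hne with hl | hl
      · rw [if_pos hl] at e1
        rw [if_neg (G.ltasym _ _ hl)] at e2
        rw [e1, e2] at heq; exact absurd heq (by decide)
      · rw [if_neg (G.ltasym _ _ hl)] at e1
        rw [if_pos hl] at e2
        rw [e1, e2] at heq; exact absurd heq (by decide)

end Main

/-- A finite irreflexive oriented graph `G` has an ios-injective
homomorphism to `T_3` iff `G` has no oriented 4-cycle as a subgraph and none of
`C_3, P_4, H_4, H_4^c, H_5, H_5^c, A_4, A_4^c, B_2, B_2^c` is a subgraph of `G`. -/
theorem stmt8 {V : Type} [Fintype V] (E : V → V → Prop)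
    (hor : IsOriented E) (hirr : NoLoops E) :
    (∃ f : V → Fin 3, IsHom E (TTrel 3) f ∧ IosInj E f) ↔
      ((¬ ∃ σ : ℕ → Bool, Subg (OCycRel 4 σ) E) ∧
        ¬ (Subg (DCycRel 3) E ∨ Subg (DPathRel 4) E ∨
            Subg H4rel E ∨ Subg (convRel H4rel) E ∨
            Subg H5rel E ∨ Subg (convRel H5rel) E ∨
            Subg A4rel E ∨ Subg (convRel A4rel) E ∨
            Subg B2rel E ∨ Subg (convRel B2rel) E)) := by
  constructor
  · rintro ⟨f, hf, hi⟩
    refine ⟨?_, ?_⟩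
    · rintro ⟨σ, hsub⟩
      obtain ⟨g, h1, h2⟩ := comp_ios hsub hf hi
      exact noOC4 σ g ⟨h1, h2⟩
    · rintro (h | h | h | h | h | h | h | h | h | h)
      · obtain ⟨g, h1, h2⟩ := comp_ios h hf hi; exact noC3 g ⟨h1, h2⟩
      · obtain ⟨g, h1, h2⟩ := comp_ios h hf hi; exact noP4 g ⟨h1, h2⟩
      · obtain ⟨g, h1, h2⟩ := comp_ios h hf hi; exact noH4 g ⟨h1, h2⟩
      · obtain ⟨g, h1, h2⟩ := comp_ios h hf hi; exact noH4c g ⟨h1, h2⟩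
      · obtain ⟨g, h1, h2⟩ := comp_ios h hf hi; exact noH5 g ⟨h1, h2⟩
      · obtain ⟨g, h1, h2⟩ := comp_ios h hf hi; exact noH5c g ⟨h1, h2⟩
      · obtain ⟨g, h1, h2⟩ := comp_ios h hf hi; exact noA4 g ⟨h1, h2⟩
      · obtain ⟨g, h1, h2⟩ := comp_ios h hf hi; exact noA4c g ⟨h1, h2⟩
      · obtain ⟨g, h1, h2⟩ := comp_ios h hf hi; exact noB2 g ⟨h1, h2⟩
      · obtain ⟨g, h1, h2⟩ := comp_ios h hf hi; exact noB2c g ⟨h1, h2⟩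
  · rintro ⟨hc4, hrest⟩
    have nC3 : ¬ Subg (DCycRel 3) E := fun h => hrest (Or.inl h)
    have nP4 : ¬ Subg (DPathRel 4) E := fun h => hrest (Or.inr (Or.inl h))
    have nH4 : ¬ Subg H4rel E := fun h => hrest (Or.inr (Or.inr (Or.inl h)))
    have nH4c : ¬ Subg (convRel H4rel) E :=
      fun h => hrest (Or.inr (Or.inr (Or.inr (Or.inl h))))
    have nH5 : ¬ Subg H5rel E :=
      fun h => hrest (Or.inr (Or.inr (Or.inr (Or.inr (Or.inl h)))))
    have nH5c : ¬ Subg (convRel H5rel) E :=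
      fun h => hrest (Or.inr (Or.inr (Or.inr (Or.inr (Or.inr (Or.inl h))))))
    have nA4 : ¬ Subg A4rel E :=
      fun h => hrest (Or.inr (Or.inr (Or.inr (Or.inr (Or.inr (Or.inr (Or.inl h)))))))
    have nA4c : ¬ Subg (convRel A4rel) E :=
      fun h => hrest (Or.inr (Or.inr (Or.inr (Or.inr (Or.inr (Or.inr (Or.inr (Or.inl h))))))))
    have nB2 : ¬ Subg B2rel E :=
      fun h => hrest (Or.inr (Or.inr (Or.inr (Or.inr (Or.inr (Or.inr (Or.inr (Or.inr
        (Or.inl h)))))))))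
    have nB2c : ¬ Subg (convRel B2rel) E :=
      fun h => hrest (Or.inr (Or.inr (Or.inr (Or.inr (Or.inr (Or.inr (Or.inr (Or.inr
        (Or.inr h)))))))))
    classical
    let e := Fintype.equivFin V
    let lt : V → V → Prop := fun a b => e a < e b
    have ltasym : ∀ u v, lt u v → ¬ lt v u := fun u v h h' => absurd h (not_lt.mpr (le_of_lt h'))
    have lttot : ∀ u v, u ≠ v → lt u v ∨ lt v u := by
      intro u v huv
      rcases lt_or_gt_of_ne (fun h : e u = e v => huv (e.injective h)) with h | h
      · exact Or.inl h
      · exact Or.inr h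
    have G := mkGood E lt ltasym lttot hor hirr hc4 nC3 nP4 nH4 nH4c nH5 nH5c nA4 nA4c nB2 nB2c
    exact ⟨fcol E lt, fcol_hom G, fcol_ios G⟩
end
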